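/- arXiv:1509.06034 — 9 statements merged into one kernel-verified Lean document; each statement's English description precedes it below -/
import Mathlib

section
/- Let N be an n × m real matrix and suppose there exists ω ∈ ℝⁿ with all coordinates strictly positive such that ωᵀN = 0 (a strictly positive conservation law). Let σ : ℝ≥0 → ℝ≥0ⁿ be differentiable with σ'(t) = N·r(σ(t)) for some continuous r : ℝ≥0ⁿ → ℝ≥0^m. If no point of the ω-limit set of σ lies on the boundary ∂ℝ≥0ⁿ, then liminf_{t→∞} σ_i(t) > 0 for every coordinate i. (This is Proposition 2(ii): a conservative, bounded-persistent reaction network is persistent.) -/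
open Filter Topology Matrix

/-!
The weighted total mass `ω ⬝ᵥ σ t` is conserved, so with `ω ≫ 0` the forward orbit stays in the
compact box `0 ≤ x_j ≤ (ω ⬝ᵥ σ 0) / ω j`. If `liminf σ_i ≤ 0`, pick times `t_k → ∞` with
`σ_i(t_k) < 1 / (k + 1)`; a convergent subsequence of `σ(t_k)` then has an ω-limit point `s`
with `s_i ≤ 0`, which the hypothesis excludes.
-/

theorem dotProduct_eq_of_hasDerivAt_mulVec {ι κ : Type*} [Fintype ι] [Fintype κ]
    {N : Matrix ι κ ℝ} {ω : ι → ℝ} (hω : vecMul ω N = 0) {σ : ℝ → ι → ℝ} {v : ℝ → κ → ℝ}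
    (hσ : ∀ t, 0 ≤ t → HasDerivAt σ (N *ᵥ v t) t) {t : ℝ} (ht : 0 ≤ t) :
    ω ⬝ᵥ σ t = ω ⬝ᵥ σ 0 := by
  have hderiv : ∀ s, 0 ≤ s → HasDerivAt (fun u => ω ⬝ᵥ σ u) 0 s := fun s hs => by
    have h := HasDerivAt.fun_sum (u := Finset.univ)
      fun i _ => (hasDerivAt_pi.1 (hσ s hs) i).const_mul (ω i)
    rwa [← dotProduct, dotProduct_mulVec, hω, zero_dotProduct] at h
  exact constant_of_has_deriv_right_zero (f := fun u => ω ⬝ᵥ σ u)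
    (fun s hs => (hderiv s hs.1).continuousAt.continuousWithinAt)
    (fun s hs => (hderiv s hs.1).hasDerivWithinAt) t ⟨ht, le_rfl⟩

theorem apply_le_dotProduct_div {ι : Type*} [Fintype ι] {ω x : ι → ℝ} (hω : ∀ i, 0 < ω i)
    (hx : 0 ≤ x) (i : ι) : x i ≤ ω ⬝ᵥ x / ω i := by
  rw [le_div_iff₀ (hω i), mul_comm]
  exact Finset.single_le_sum (fun j _ => mul_nonneg (hω j).le (hx j)) (Finset.mem_univ i)

theorem exists_seq_tendsto_atTop_forall_of_frequently {p : ℕ → ℝ → Prop}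
    (h : ∀ k, ∃ᶠ t in atTop, p k t) :
    ∃ tk : ℕ → ℝ, Tendsto tk atTop atTop ∧ ∀ k, p k (tk k) := by
  choose tk htk hp using fun k : ℕ => frequently_atTop.1 (h k) k
  exact ⟨tk, tendsto_atTop_mono htk tendsto_natCast_atTop_atTop, hp⟩

def IsOmegaLimitPoint {E : Type*} [TopologicalSpace E] (σ : ℝ → E) (s : E) : Prop :=
  ∃ tk : ℕ → ℝ, Tendsto tk atTop atTop ∧ Tendsto (σ ∘ tk) atTop (𝓝 s)

theorem liminf_comp_pos_of_forall_isOmegaLimitPoint {E : Type*} [TopologicalSpace E]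
    [FirstCountableTopology E] {K : Set E} (hK : IsCompact K) {σ : ℝ → E}
    (hσK : ∀ᶠ t in atTop, σ t ∈ K) {g : E → ℝ} (hg : ContinuousOn g K)
    (hpos : ∀ s, IsOmegaLimitPoint σ s → 0 < g s) :
    0 < liminf (fun t => g (σ t)) atTop := by
  by_contra! hle
  have hbdd : IsBoundedUnder (· ≤ ·) atTop (fun t => g (σ t)) := by
    obtain ⟨b, hb⟩ := hK.bddAbove_image hg
    exact ⟨b, hσK.mono fun t ht => hb ⟨σ t, ht, rfl⟩⟩
  have hsmall : ∀ k : ℕ, ∃ᶠ t in atTop, σ t ∈ K ∧ g (σ t) < 1 / (k + 1) := fun k =>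
    ((frequently_lt_of_liminf_lt hbdd.isCoboundedUnder_ge
      (hle.trans_lt (by positivity))).and_eventually hσK).mono fun _ h => h.symm
  obtain ⟨tk, htk, hsmall_tk⟩ := exists_seq_tendsto_atTop_forall_of_frequently hsmall
  obtain ⟨hmem, hlt⟩ := forall_and.1 hsmall_tk
  obtain ⟨s, hs, φ, hφ, hconv⟩ := hK.tendsto_subseq hmem
  have hgs : g s ≤ 0 :=
    le_of_tendsto_of_tendsto' ((hg s hs).tendsto.comp (tendsto_nhdsWithin_iff.2
      ⟨hconv, Eventually.of_forall fun k => hmem (φ k)⟩))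
      (tendsto_one_div_add_atTop_nhds_zero_nat.comp hφ.tendsto_atTop) fun k => (hlt (φ k)).le
  exact (hpos s ⟨_, htk.comp hφ.tendsto_atTop, hconv⟩).not_ge hgs

theorem conservative_bounded_persistent_implies_persistent_general {n m : ℕ}
    (N : Matrix (Fin n) (Fin m) ℝ)
    (ω : Fin n → ℝ) (hω : ∀ i, 0 < ω i) (hconsv : Matrix.vecMul ω N = 0)
    (r : (Fin n → ℝ) → Fin m → ℝ)
    (σ : ℝ → Fin n → ℝ)
    (hnonneg : ∀ t : ℝ, 0 ≤ t → ∀ i, 0 ≤ σ t i)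
    (hode : ∀ t : ℝ, 0 ≤ t → HasDerivAt σ (N.mulVec (r (σ t))) t)
    (homega : ∀ s : Fin n → ℝ, ∀ tk : ℕ → ℝ,
      Filter.Tendsto tk Filter.atTop Filter.atTop →
      Filter.Tendsto (fun k => σ (tk k)) Filter.atTop (nhds s) →
      ∀ i, 0 < s i) :
    ∀ i, 0 < Filter.liminf (fun t => σ t i) Filter.atTop := by
  have hbox : ∀ᶠ t in atTop, σ t ∈ Set.Icc 0 fun j => ω ⬝ᵥ σ 0 / ω j :=
    eventually_atTop.2 ⟨0, fun t ht => ⟨hnonneg t ht, fun j => by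
      simpa only [dotProduct_eq_of_hasDerivAt_mulVec hconsv hode ht]
        using apply_le_dotProduct_div hω (hnonneg t ht) j⟩⟩
  exact fun i => liminf_comp_pos_of_forall_isOmegaLimitPoint isCompact_Icc hbox
    (continuous_apply i).continuousOn fun s ⟨tk, htk, hconv⟩ => homega s tk htk hconv i

/-- Proposition 2(ii): a conservative, bounded-persistent reaction network is
persistent.  If `N` admits a strictly positive conservation law `ω` (`ωᵀN = 0`)
and `σ` is a nonnegative solution of `σ' = N r(σ)` for a continuous
nonnegative rate function `r`, and no point of the ω-limit set of `σ` lies on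
the boundary of the nonnegative orthant, then `liminf_{t→∞} σ_i(t) > 0` for
every coordinate `i`. -/
theorem conservative_bounded_persistent_implies_persistent {n m : ℕ}
    (N : Matrix (Fin n) (Fin m) ℝ)
    (ω : Fin n → ℝ) (hω : ∀ i, 0 < ω i) (hconsv : Matrix.vecMul ω N = 0)
    (r : (Fin n → ℝ) → Fin m → ℝ) (hr : Continuous r)
    (hrnonneg : ∀ s : Fin n → ℝ, (∀ i, 0 ≤ s i) → ∀ j, 0 ≤ r s j)
    (σ : ℝ → Fin n → ℝ)
    (hnonneg : ∀ t : ℝ, 0 ≤ t → ∀ i, 0 ≤ σ t i)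
    (hode : ∀ t : ℝ, 0 ≤ t → HasDerivAt σ (N.mulVec (r (σ t))) t)
    (homega : ∀ s : Fin n → ℝ, ∀ tk : ℕ → ℝ,
      Filter.Tendsto tk Filter.atTop Filter.atTop →
      Filter.Tendsto (fun k => σ (tk k)) Filter.atTop (nhds s) →
      ∀ i, 0 < s i) :
    ∀ i, 0 < Filter.liminf (fun t => σ t i) Filter.atTop :=
  conservative_bounded_persistent_implies_persistent_general N ω hω hconsv r σ hnonneg hode homega
end

section
/- Let G = (S, C, R) be a reaction network with n species and m reactions, where reaction R_j has reactant vector α_{·j} ∈ ℝ≥0ⁿ and product vector α'_{·j} ∈ ℝ≥0ⁿ, and stoichiometric matrix N with N_{ij} = α'_{ij} − α_{ij}. Let r : ℝ≥0ⁿ → ℝ≥0^m satisfy: for each j and each s ∈ ℝ≥0ⁿ, r_j(s) = 0 if and only if s_i = 0 for some i with α_{ij} > 0. If s_0 ∈ ℝ≥0ⁿ is a boundary steady state, i.e., N·r(s_0) = 0 and s_0 has at least one zero coordinate, then the zero coordinate set Z(s_0) = {S_i : (s_0)_i = 0} is a siphon of G. -/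
/-- Lemma (Shiu–Sturmfels, under assumption (r2)): if `s₀` is a boundary
steady state of a reaction network with reactant matrix `α`, product matrix
`α'` and stoichiometric matrix `N = α' - α`, where the rate function `r` is
nonnegative on the nonnegative orthant and vanishes exactly when some reactant
concentration vanishes, then the zero coordinate set `Z(s₀) = {i : s₀ᵢ = 0}`
is a siphon: it is nonempty, and every reaction having a product species in
`Z(s₀)` also has a reactant species in `Z(s₀)`. -/
theorem zero_set_of_boundary_steady_state_is_siphon {n m : ℕ}
    (α α' : Fin m → Fin n → ℝ)
    (hα : ∀ j i, 0 ≤ α j i) (hα' : ∀ j i, 0 ≤ α' j i)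
    (N : Matrix (Fin n) (Fin m) ℝ) (hN : ∀ i j, N i j = α' j i - α j i)
    (r : (Fin n → ℝ) → Fin m → ℝ)
    (hrnonneg : ∀ s : Fin n → ℝ, (∀ i, 0 ≤ s i) → ∀ j, 0 ≤ r s j)
    (hr2 : ∀ (j : Fin m) (s : Fin n → ℝ), (∀ i, 0 ≤ s i) →
      (r s j = 0 ↔ ∃ i, 0 < α j i ∧ s i = 0))
    (s0 : Fin n → ℝ) (hs0 : ∀ i, 0 ≤ s0 i)
    (hbd : ∃ i, s0 i = 0) (hss : N.mulVec (r s0) = 0) :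
    (∃ i, s0 i = 0) ∧
    ∀ j : Fin m, (∃ i, s0 i = 0 ∧ 0 < α' j i) → ∃ i, s0 i = 0 ∧ 0 < α j i := by
  refine ⟨hbd, ?_⟩
  rintro j ⟨i, hi0, hi'⟩
  have hαzero : ∀ k, 0 < r s0 k → α k i = 0 := by
    intro k hk
    by_contra hne
    have : r s0 k = 0 :=
      (hr2 k s0 hs0).mpr ⟨i, lt_of_le_of_ne (hα k i) (Ne.symm hne), hi0⟩
    linarith
  have hterm : ∀ k, 0 ≤ N i k * r s0 k := by
    intro k
    rcases eq_or_lt_of_le (hrnonneg s0 hs0 k) with h | h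
    · simp [← h]
    · have : N i k = α' k i := by rw [hN, hαzero k h]; ring
      rw [this]; exact mul_nonneg (hα' k i) h.le
  have hsum : ∑ k, N i k * r s0 k = 0 := by
    have := congrFun hss i
    simpa [Matrix.mulVec, dotProduct] using this
  have hj0 : N i j * r s0 j = 0 :=
    (Finset.sum_eq_zero_iff_of_nonneg (fun k _ => hterm k)).mp hsum j (Finset.mem_univ j)
  rcases eq_or_lt_of_le (hrnonneg s0 hs0 j) with h | h
  · obtain ⟨i', hi'pos, hi'0⟩ := (hr2 j s0 hs0).mp h.symm
    exact ⟨i', hi'0, hi'pos⟩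
  · exfalso
    have : N i j = α' j i := by rw [hN, hαzero j h]; ring
    rw [this] at hj0
    nlinarith
end

section
/- Let G = (S, C, R) be a reaction network with stoichiometric matrix N, and let Σ ⊆ S be a nonempty subset of species. If Σ is drainable or self-replicable, then Σ is critical, i.e., Σ does not contain the support of any P-semiflow: there is no nonzero ω ∈ ℝ≥0ⁿ with ωᵀN = 0 and {S_i : ω_i > 0} ⊆ Σ. -/
/-- A reaction network: a finite set of species, a finite set of complexes
(nonnegative vectors supported on the species), and a finite set of reactions
(a digraph on the complexes with no self-loops), such that every complex takes
part in some reaction and every species is part of some complex. -/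
structure RN (ι : Type) where
  species : Finset ι
  complexes : Finset (ι → ℝ)
  reactions : Finset ((ι → ℝ) × (ι → ℝ))
  complexes_nonneg : ∀ y ∈ complexes, ∀ i, 0 ≤ y i
  complexes_supp : ∀ y ∈ complexes, ∀ i, y i ≠ 0 → i ∈ species
  react_mem_fst : ∀ r ∈ reactions, r.1 ∈ complexes
  react_mem_snd : ∀ r ∈ reactions, r.2 ∈ complexes
  no_loops : ∀ r ∈ reactions, r.1 ≠ r.2
  complexes_used : ∀ y ∈ complexes, ∃ r ∈ reactions, r.1 = y ∨ r.2 = y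
  species_used : ∀ i ∈ species, ∃ y ∈ complexes, y i ≠ 0

namespace RN

variable {ι : Type}

/-- A siphon: a nonempty set of species such that every reaction having a
product species in it also has a reactant species in it. -/
def IsSiphon (G : RN ι) (T : Set ι) : Prop :=
  T.Nonempty ∧ T ⊆ ↑G.species ∧
    ∀ r ∈ G.reactions, (∃ i ∈ T, 0 < r.2 i) → ∃ i ∈ T, 0 < r.1 i

/-- A minimal siphon: a siphon not properly containing any other siphon. -/
def MinimalSiphon (G : RN ι) (T : Set ι) : Prop :=
  G.IsSiphon T ∧ ∀ T' : Set ι, G.IsSiphon T' → T' ⊆ T → T' = T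

/-- A nonempty set of species is drainable if some finite sequence of reactions
(with repetitions allowed) strictly decreases every one of its coordinates. -/
def Drainable (G : RN ι) (T : Set ι) : Prop :=
  T.Nonempty ∧ T ⊆ ↑G.species ∧
    ∃ L : List ((ι → ℝ) × (ι → ℝ)), (∀ r ∈ L, r ∈ G.reactions) ∧
      ∀ i ∈ T, (L.map (fun r => r.2 i - r.1 i)).sum < 0

/-- A nonempty set of species is self-replicable if some finite sequence of
reactions (with repetitions allowed) strictly increases every one of its
coordinates. -/
def SelfReplicable (G : RN ι) (T : Set ι) : Prop :=
  T.Nonempty ∧ T ⊆ ↑G.species ∧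
    ∃ L : List ((ι → ℝ) × (ι → ℝ)), (∀ r ∈ L, r ∈ G.reactions) ∧
      ∀ i ∈ T, 0 < (L.map (fun r => r.2 i - r.1 i)).sum

/-- A P-semiflow: a nonzero nonnegative vector supported on the species with
ωᵀN = 0, i.e. ω · (y' - y) = 0 for every reaction y → y'. -/
def IsPSemiflow (G : RN ι) (ω : ι → ℝ) : Prop :=
  (∀ i, 0 ≤ ω i) ∧ (∀ i, ω i ≠ 0 → i ∈ G.species) ∧ ω ≠ 0 ∧
    ∀ r ∈ G.reactions, ∑ i ∈ G.species, ω i * (r.2 i - r.1 i) = 0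

/-- The siphon/P-semiflow property: every siphon contains the support of a
P-semiflow. -/
def SiphonPSemiflowProperty (G : RN ι) : Prop :=
  ∀ T : Set ι, G.IsSiphon T → ∃ ω : ι → ℝ, G.IsPSemiflow ω ∧ {i | 0 < ω i} ⊆ T

/-- Consistency: there is a strictly positive T-semiflow, i.e. strictly
positive reaction weights v with N v = 0. -/
def Consistent (G : RN ι) : Prop :=
  ∃ v : ((ι → ℝ) × (ι → ℝ)) → ℝ, (∀ r ∈ G.reactions, 0 < v r) ∧
    ∀ i : ι, ∑ r ∈ G.reactions, v r * (r.2 i - r.1 i) = 0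

/-- Conservativity: there is a strictly positive conservation law ω ≫ 0 with
ωᵀN = 0. -/
def Conservative (G : RN ι) : Prop :=
  ∃ ω : ι → ℝ, (∀ i ∈ G.species, 0 < ω i) ∧
    ∀ r ∈ G.reactions, ∑ i ∈ G.species, ω i * (r.2 i - r.1 i) = 0

/-- A directed reaction path from `y` to `y'` all of whose non-endpoint
complexes lie in the set `A`. -/
def PathThrough (G : RN ι) (A : Set (ι → ℝ)) (y y' : ι → ℝ) : Prop :=
  ∃ L : List (ι → ℝ), (∀ z ∈ L, z ∈ A) ∧
    List.Chain (fun a b => (a, b) ∈ G.reactions) y (L ++ [y'])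

end RN

variable {ι : Type}

/-- The complex consisting of the single species `j` (with unit coefficient),
for `j` in the given set. -/
def InterCplx [DecidableEq ι] (Y : Finset ι) (z : ι → ℝ) : Prop :=
  ∃ j ∈ Y, z = Pi.single j 1

/-- The complex `z` is supported off the set `Y`. -/
def OffSet (Y : Finset ι) (z : ι → ℝ) : Prop := ∀ j ∈ Y, z j = 0

namespace RN

/-- `Y` is a set of intermediate species of `G`: (I1) every complex is either
supported off `Y` or equals a single species of `Y` with unit coefficient;
(I2) every `Y`-complex is connected to non-intermediate complexes by directed
reaction paths, in both directions, all of whose non-endpoints are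
intermediates. -/
def IsIntermediateSet [DecidableEq ι] (G : RN ι) (Y : Finset ι) : Prop :=
  Y.Nonempty ∧ Y ⊆ G.species ∧
    (∀ y ∈ G.complexes, OffSet Y y ∨ InterCplx Y y) ∧
    (∀ j ∈ Y, ∃ y ∈ G.complexes, ∃ y' ∈ G.complexes, OffSet Y y ∧ OffSet Y y' ∧
      G.PathThrough {z | InterCplx Y z} y (Pi.single j 1) ∧
      G.PathThrough {z | InterCplx Y z} (Pi.single j 1) y')

/-- `G'` is the reduction of `G` by removal of the set of intermediates `Y`:
its reactions are exactly the pairs `y → y'` of distinct non-intermediate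
complexes of `G` joined by a directed reaction path all of whose non-endpoints
are intermediates (in particular all reactions of `G` between non-intermediate
complexes). -/
def IsIntermediateReduction [DecidableEq ι] (G : RN ι) (Y : Finset ι) (G' : RN ι) : Prop :=
  ∀ p : (ι → ℝ) × (ι → ℝ), p ∈ G'.reactions ↔
    (p.1 ∈ G.complexes ∧ p.2 ∈ G.complexes ∧ OffSet Y p.1 ∧ OffSet Y p.2 ∧
      p.1 ≠ p.2 ∧ G.PathThrough {z | InterCplx Y z} p.1 p.2)

end RN

/-- The projection of a complex onto the coordinates outside `E` (the
coordinates in `E` are set to zero). -/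
def projOff [DecidableEq ι] (E : Finset ι) (y : ι → ℝ) : ι → ℝ :=
  fun i => if i ∈ E then 0 else y i

namespace RN

/-- `E` is a set of catalysts of `G`, with `GE` the subnetwork of `G` implied
by `E`: (C1) every reaction either leaves the `E`-coordinates untouched or is
supported entirely in `E`; `GE` consists of the reactions of `G` involving
only species of `E`; and (C2) `GE` has no drainable and no self-replicable
siphons. -/
def IsCatalystSet (G GE : RN ι) (E : Finset ι) : Prop :=
  E.Nonempty ∧ E ⊆ G.species ∧
    (∀ r ∈ G.reactions, (∀ i ∈ E, r.1 i = r.2 i) ∨ (∀ i, i ∉ E → r.1 i = 0 ∧ r.2 i = 0)) ∧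
    (∀ p : (ι → ℝ) × (ι → ℝ), p ∈ GE.reactions ↔
      (p ∈ G.reactions ∧ (∀ i, p.1 i ≠ 0 → i ∈ E) ∧ (∀ i, p.2 i ≠ 0 → i ∈ E))) ∧
    (∀ T : Set ι, GE.IsSiphon T → ¬ GE.Drainable T ∧ ¬ GE.SelfReplicable T)

/-- `G'` is the reduction of `G` by removal of the set of catalysts `E`: its
reactions are the projections off `E` of those reactions of `G` at least one
of whose projected sides is nonzero. -/
def IsCatalystReduction [DecidableEq ι] (G : RN ι) (E : Finset ι) (G' : RN ι) : Prop :=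
  ∀ p : (ι → ℝ) × (ι → ℝ), p ∈ G'.reactions ↔
    ∃ r ∈ G.reactions, p = (projOff E r.1, projOff E r.2) ∧
      (projOff E r.1 ≠ 0 ∨ projOff E r.2 ≠ 0)

/-- A monomolecular network: every complex is either zero or a single species
with unit coefficient. -/
def Monomolecular [DecidableEq ι] (G : RN ι) : Prop :=
  ∀ y ∈ G.complexes, y = 0 ∨ ∃ i ∈ G.species, y = Pi.single i 1

end RN

/-! A P-semiflow `ω` annihilates every reaction vector, hence also the net change `Δ` of any
sequence of reactions. But `ω ≥ 0` is nonzero and supported in `T`, where `Δ` has a strict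
sign, so `∑ ω i * Δ i` has that strict sign as well. -/

namespace RN

variable {ι : Type}

def netChange (L : List ((ι → ℝ) × (ι → ℝ))) (i : ι) : ℝ :=
  (L.map fun r => r.2 i - r.1 i).sum

theorem sum_mul_netChange_eq_zero {G : RN ι} {ω : ι → ℝ}
    (hω : ∀ r ∈ G.reactions, ∑ i ∈ G.species, ω i * (r.2 i - r.1 i) = 0)
    {L : List ((ι → ℝ) × (ι → ℝ))} (hL : ∀ r ∈ L, r ∈ G.reactions) :
    ∑ i ∈ G.species, ω i * netChange L i = 0 := by
  induction L with
  | nil => simp [netChange]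
  | cons r L ih =>
    rw [List.forall_mem_cons] at hL
    simp only [netChange, List.map_cons, List.sum_cons, mul_add, Finset.sum_add_distrib] at ih ⊢
    rw [hω r hL.1, ih hL.2, add_zero]

theorem IsPSemiflow.exists_pos {G : RN ι} {ω : ι → ℝ} (hω : G.IsPSemiflow ω) :
    ∃ i ∈ G.species, 0 < ω i := by
  obtain ⟨hnonneg, hsupp, hne, -⟩ := hω
  obtain ⟨i, hi⟩ := Function.ne_iff.mp hne
  exact ⟨i, hsupp i hi, (hnonneg i).lt_of_ne' hi⟩

end RN

theorem Finset.exists_nonpos_of_sum_mul_eq_zero {ι : Type*} {s : Finset ι} {ω Δ : ι → ℝ}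
    (hω : ∀ i, 0 ≤ ω i) (hpos : ∃ i ∈ s, 0 < ω i) (hsum : ∑ i ∈ s, ω i * Δ i = 0) :
    ∃ i, 0 < ω i ∧ Δ i ≤ 0 := by
  by_contra! hΔ
  refine (Finset.sum_pos' (fun i _ => ?_) ?_).ne' hsum
  · rcases (hω i).lt_or_eq with hωi | hωi
    · exact (mul_pos hωi (hΔ i hωi)).le
    · simp [← hωi]
  · obtain ⟨i, hi, hωi⟩ := hpos
    exact ⟨i, hi, mul_pos hωi (hΔ i hωi)⟩

theorem drainable_or_selfReplicable_is_critical_general {ι : Type} (G : RN ι) (T : Set ι)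
    (h : G.Drainable T ∨ G.SelfReplicable T) :
    ¬ ∃ ω : ι → ℝ, G.IsPSemiflow ω ∧ {i | 0 < ω i} ⊆ T := by
  rintro ⟨ω, hω, hsupp⟩
  have hpos := hω.exists_pos
  rcases h with ⟨-, -, L, hL, hdrain⟩ | ⟨-, -, L, hL, hrepl⟩
  · have hsum : ∑ i ∈ G.species, ω i * -RN.netChange L i = 0 := by
      simp only [mul_neg, Finset.sum_neg_distrib, RN.sum_mul_netChange_eq_zero hω.2.2.2 hL,
        neg_zero]
    obtain ⟨i, hωi, hi⟩ := Finset.exists_nonpos_of_sum_mul_eq_zero hω.1 hpos hsum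
    exact (neg_nonpos.mp hi).not_gt (hdrain i (hsupp hωi))
  · obtain ⟨i, hωi, hi⟩ := Finset.exists_nonpos_of_sum_mul_eq_zero hω.1 hpos
      (RN.sum_mul_netChange_eq_zero hω.2.2.2 hL)
    exact hi.not_gt (hrepl i (hsupp hωi))

/-- Proposition 1(i): a drainable or self-replicable set of species is
critical, i.e. it does not contain the support of any P-semiflow. -/
theorem drainable_or_selfReplicable_is_critical {ι : Type} (G : RN ι) (T : Set ι)
    (hT : T.Nonempty) (hTS : T ⊆ ↑G.species)
    (h : G.Drainable T ∨ G.SelfReplicable T) :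
    ¬ ∃ ω : ι → ℝ, G.IsPSemiflow ω ∧ {i | 0 < ω i} ⊆ T :=
  drainable_or_selfReplicable_is_critical_general G T h
end

section
/- A reaction network G has the siphon/P-semiflow property if and only if G has no drainable siphons and no self-replicable siphons. -/
variable {ι : Type}

/-!
A P-semiflow `ω` supported in a siphon `T` is a nonnegative weighting of the species that no
reaction changes, so no sequence of reactions can decrease, or increase, every species of `T`.

Conversely, shrink `T` to a minimal siphon `S`. Real nonnegative combinations of reactions can be
scaled and rounded to integer ones, so if `S` is not self-replicable, Gordan's alternative gives a
nonzero weighting `ω₁ ≥ 0` of `S` that no reaction increases, and if `S` is not drainable, a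
nonzero `ω₂ ≥ 0` on `S` that no reaction decreases. The support of a weighting of the first kind
is a siphon, hence all of `S` by minimality. Subtracting from `ω₁` the largest multiple of `ω₂`
that keeps it nonnegative leaves a weighting of the first kind vanishing somewhere on `S`, hence
zero; so `ω₁` is proportional to `ω₂`, and no reaction changes it.
-/

open Finset

section LinearInequalities

variable {κ θ : Type*}

lemma nonpos_of_forall_nonneg_mul_le {b C : ℝ} (h : ∀ τ : ℝ, 0 ≤ τ → τ * b ≤ C) : b ≤ 0 := by
  by_contra! hb
  have := h ((|C| + 1) / b) (by positivity)
  rw [div_mul_cancel₀ _ hb.ne'] at this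
  linarith [le_abs_self C]

/-- Gordan's theorem of the alternative. -/
theorem exists_nonneg_dotProduct_nonpos_of_not_exists_pos [Fintype κ] (F : Finset θ)
    (c : θ → κ → ℝ) (h : ¬ ∃ v : θ → ℝ, (∀ j ∈ F, 0 ≤ v j) ∧ ∀ i, 0 < ∑ j ∈ F, v j * c j i) :
    ∃ ω : κ → ℝ, 0 ≤ ω ∧ ω ≠ 0 ∧ ∀ j ∈ F, ω ⬝ᵥ c j ≤ 0 := by
  classical
  set s : Set (κ → ℝ) := Set.univ.pi fun _ => Set.Ioi 0
  set t : Set (κ → ℝ) :=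
    (fun v : θ → ℝ => ∑ j ∈ F, v j • c j) '' (F : Set θ).pi fun _ => Set.Ici 0
  have hs : Convex ℝ s := convex_pi fun _ _ => convex_Ioi 0
  have hs_open : IsOpen s := isOpen_set_pi Set.finite_univ fun _ _ => isOpen_Ioi
  have ht : Convex ℝ t := (convex_pi fun _ _ => convex_Ici 0).is_linear_image
    ⟨fun _ _ => by simp only [Pi.add_apply, add_smul, sum_add_distrib],
     fun _ _ => by simp only [Pi.smul_apply, smul_sum, smul_smul, smul_eq_mul]⟩
  have hst : Disjoint s t := by
    rw [Set.disjoint_left]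
    rintro x hx ⟨v, hv, rfl⟩
    exact h ⟨v, hv, fun i => by simpa [Finset.sum_apply] using hx i (Set.mem_univ i)⟩
  obtain ⟨f, u, hfs, hft⟩ := geometric_hahn_banach_open hs hs_open ht hst
  set e : κ → κ → ℝ := fun i j => if i = j then 1 else 0
  set ω : κ → ℝ := fun i => -f (e i)
  have hf : ∀ x, f x = -(ω ⬝ᵥ x) := fun x => by
    have := LinearMap.pi_apply_eq_sum_univ (f : (κ → ℝ) →ₗ[ℝ] ℝ) x
    simp only [ContinuousLinearMap.coe_coe] at this
    simp [this, ω, e, dotProduct, mul_comm]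
  have hu : u ≤ 0 := by simpa using hft 0 ⟨0, fun _ _ => by simp, by simp⟩
  have hf1 : f 1 < u := hfs 1 fun _ _ => by simp
  have hfe : ∀ i, f (e i) ≤ 0 := fun i =>
    nonpos_of_forall_nonneg_mul_le (C := u - f 1) fun τ hτ => by
      have hmem : 1 + τ • e i ∈ s := fun k _ => by
        simp only [e, Pi.add_apply, Pi.smul_apply, Pi.one_apply, smul_eq_mul, Set.mem_Ioi]
        split_ifs <;> positivity
      have := hfs _ hmem
      rw [map_add, map_smul, smul_eq_mul] at this
      linarith
  have hfc : ∀ j ∈ F, 0 ≤ f (c j) := fun j hj =>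
    neg_nonpos.1 <| nonpos_of_forall_nonneg_mul_le (C := -u) fun τ hτ => by
      have hmem : τ • c j ∈ t := ⟨Pi.single j τ, fun k _ => by
        by_cases hk : k = j <;> simp [hk, hτ], by
        show ∑ k ∈ F, (Pi.single j τ : θ → ℝ) k • c k = τ • c j
        rw [sum_eq_single_of_mem j hj fun k _ hk => by simp [hk]]
        simp⟩
      have := hft _ hmem
      rw [map_smul, smul_eq_mul] at this
      linarith
  refine ⟨ω, fun i => neg_nonneg.2 (hfe i), fun hω => ?_, fun j hj => ?_⟩
  · simp only [hf, hω, zero_dotProduct, neg_zero] at hf1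
    linarith
  · linarith [hf (c j), hfc j hj]

theorem exists_sum_mul_nonpos_of_not_exists_pos (S : Finset κ) (F : Finset θ) (c : θ → κ → ℝ)
    (h : ¬ ∃ v : θ → ℝ, (∀ j ∈ F, 0 ≤ v j) ∧ ∀ i ∈ S, 0 < ∑ j ∈ F, v j * c j i) :
    ∃ ω : κ → ℝ, (∀ i, 0 ≤ ω i) ∧ (∀ i ∉ S, ω i = 0) ∧ (∃ i ∈ S, ω i ≠ 0) ∧
      ∀ j ∈ F, ∑ i ∈ S, ω i * c j i ≤ 0 := by
  classical
  obtain ⟨ω, hω0, hωne, hωc⟩ := exists_nonneg_dotProduct_nonpos_of_not_exists_pos F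
    (fun j (i : S) => c j i) fun ⟨v, hv, hpos⟩ => h ⟨v, hv, fun i hi => hpos ⟨i, hi⟩⟩
  obtain ⟨k, hk⟩ := Function.ne_iff.1 hωne
  refine ⟨fun i => if hi : i ∈ S then ω ⟨i, hi⟩ else 0, fun i => ?_, fun i hi => dif_neg hi,
    ⟨k, k.2, by simpa using hk⟩, fun j hj => ?_⟩
  · dsimp only
    split_ifs
    exacts [hω0 _, le_rfl]
  · rw [← sum_coe_sort S]
    simpa [dotProduct] using hωc j hj

theorem sum_mul_eq_zero_of_rigid {S : Finset κ} {F : Finset θ} {c : θ → κ → ℝ}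
    (hrigid : ∀ ω : κ → ℝ, (∀ i ∈ S, 0 ≤ ω i) → (∀ j ∈ F, ∑ i ∈ S, ω i * c j i ≤ 0) →
      ∀ i ∈ S, ω i = 0 → ∀ k ∈ S, ω k = 0)
    {ω₁ ω₂ : κ → ℝ} (h₁ : ∀ i ∈ S, 0 ≤ ω₁ i) (h₁c : ∀ j ∈ F, ∑ i ∈ S, ω₁ i * c j i ≤ 0)
    (h₂ : ∀ i ∈ S, 0 ≤ ω₂ i) (h₂ne : ∃ i ∈ S, ω₂ i ≠ 0)
    (h₂c : ∀ j ∈ F, 0 ≤ ∑ i ∈ S, ω₂ i * c j i) :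
    ∀ j ∈ F, ∑ i ∈ S, ω₁ i * c j i = 0 := by
  classical
  -- subtract from `ω₁` the largest multiple `ε • ω₂` that keeps it nonnegative on `S`
  obtain ⟨k, hkS, hk⟩ := h₂ne
  obtain ⟨m, hmP, hmin⟩ := (S.filter fun i => 0 < ω₂ i).exists_min_image (fun i => ω₁ i / ω₂ i)
    ⟨k, mem_filter.2 ⟨hkS, (h₂ k hkS).lt_of_ne' hk⟩⟩
  obtain ⟨hmS, hm⟩ := mem_filter.1 hmP
  set ε := ω₁ m / ω₂ m
  have hε : 0 ≤ ε := div_nonneg (h₁ m hmS) hm.le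
  have hsum : ∀ j, ∑ i ∈ S, (ω₁ i - ε * ω₂ i) * c j i =
      ∑ i ∈ S, ω₁ i * c j i - ε * ∑ i ∈ S, ω₂ i * c j i := fun j => by
    simp only [sub_mul, sum_sub_distrib, mul_sum, mul_assoc]
  have hnonneg : ∀ i ∈ S, 0 ≤ ω₁ i - ε * ω₂ i := fun i hi => by
    rcases (h₂ i hi).eq_or_lt with h0 | hpos
    · simpa [← h0] using h₁ i hi
    · have := hmin i (mem_filter.2 ⟨hi, hpos⟩)
      rw [le_div_iff₀ hpos] at this
      linarith
  have hzero := hrigid _ hnonneg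
    (fun j hj => by rw [hsum]; linarith [h₁c j hj, mul_nonneg hε (h₂c j hj)])
    m hmS (by simp [ε, div_mul_cancel₀ _ hm.ne'])
  intro j hj
  have := hsum j
  rw [sum_eq_zero fun i hi => by rw [hzero i hi, zero_mul]] at this
  linarith [h₁c j hj, mul_nonneg hε (h₂c j hj)]

theorem exists_nat_combination_pos (S : Finset κ) (F : Finset θ) (c : θ → κ → ℝ) (v : θ → ℝ)
    (hv : ∀ j ∈ F, 0 ≤ v j) (h : ∀ i ∈ S, 0 < ∑ j ∈ F, v j * c j i) :
    ∃ n : θ → ℕ, ∀ i ∈ S, 0 < ∑ j ∈ F, (n j : ℝ) * c j i := by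
  -- scale `v` by `M` so that rounding up, which moves each term by at most `|c j i|`, is harmless
  obtain ⟨M, hM⟩ : ∃ M : ℕ, ∀ i ∈ S, ∑ j ∈ F, |c j i| < M * ∑ j ∈ F, v j * c j i :=
    ((Filter.eventually_all_finset S).2 fun i hi =>
      (tendsto_natCast_atTop_atTop.atTop_mul_const (h i hi)).eventually_gt_atTop _).exists
  refine ⟨fun j => ⌈M * v j⌉₊, fun i hi => ?_⟩
  have hround : ∀ j ∈ F, M * v j * c j i - |c j i| ≤ ⌈M * v j⌉₊ * c j i := fun j hj => by
    have h0 : M * v j ≤ ⌈M * v j⌉₊ := Nat.le_ceil _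
    have h1 : (⌈M * v j⌉₊ : ℝ) < M * v j + 1 := Nat.ceil_lt_add_one (by positivity [hv j hj])
    nlinarith [abs_nonneg (c j i), neg_abs_le (c j i), le_abs_self (c j i)]
  calc (0 : ℝ) < M * ∑ j ∈ F, v j * c j i - ∑ j ∈ F, |c j i| := by linarith [hM i hi]
    _ = ∑ j ∈ F, (M * v j * c j i - |c j i|) := by simp only [mul_sum, sum_sub_distrib, mul_assoc]
    _ ≤ _ := sum_le_sum hround

theorem exists_list_sum_map_eq_sum_nsmul {M : Type*} [AddCommMonoid M] (F : Finset θ)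
    (n : θ → ℕ) :
    ∃ L : List θ, (∀ j ∈ L, j ∈ F) ∧ ∀ g : θ → M, (L.map g).sum = ∑ j ∈ F, n j • g j := by
  refine ⟨F.toList.flatMap fun j => List.replicate (n j) j, fun j hj => ?_, fun g => ?_⟩
  · obtain ⟨k, hk, hjk⟩ := List.mem_flatMap.1 hj
    rwa [List.eq_of_mem_replicate hjk, ← mem_toList]
  · simp [List.flatMap, List.sum_flatten, Function.comp_def, Finset.sum_map_toList]

end LinearInequalities

namespace RN

variable {G : RN ι} {S : Finset ι} {T : Set ι} {ω : ι → ℝ}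

theorem IsSiphon.exists_minimalSiphon_subset (hT : G.IsSiphon T) :
    ∃ T₀ ⊆ T, G.MinimalSiphon T₀ := by
  have hfin : {T' | G.IsSiphon T' ∧ T' ⊆ T}.Finite :=
    G.species.finite_toSet.finite_subsets.subset fun _ h => h.1.2.1
  obtain ⟨T₀, hT₀, hmin⟩ := hfin.exists_le_minimal ⟨hT, subset_rfl⟩
  exact ⟨T₀, hT₀, hmin.1.1, fun T' hT' hsub => hsub.antisymm (hmin.2 ⟨hT', hsub.trans hT₀⟩ hsub)⟩

theorem IsPSemiflow.sum_mul_sum_map_eq_zero (hω : G.IsPSemiflow ω)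
    {L : List ((ι → ℝ) × (ι → ℝ))} (hL : ∀ r ∈ L, r ∈ G.reactions) :
    ∑ i ∈ G.species, ω i * (L.map fun r => r.2 i - r.1 i).sum = 0 := by
  induction L with
  | nil => simp
  | cons r L ih =>
    simp only [List.map_cons, List.sum_cons, mul_add, sum_add_distrib]
    rw [hω.2.2.2 r (hL r List.mem_cons_self), ih fun r h => hL r (List.mem_cons_of_mem _ h),
      add_zero]

theorem IsPSemiflow.sum_mul_neg (hω : G.IsPSemiflow ω) (hT : {i | 0 < ω i} ⊆ T) {x : ι → ℝ}
    (hx : ∀ i ∈ T, x i < 0) :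
    ∑ i ∈ G.species, ω i * x i < 0 := by
  obtain ⟨hω0, hωS, hωne, -⟩ := hω
  obtain ⟨k, hk⟩ := Function.ne_iff.1 hωne
  have hkpos : 0 < ω k := (hω0 k).lt_of_ne' hk
  refine sum_neg' (fun i _ => ?_) ⟨k, hωS k hk, mul_neg_of_pos_of_neg hkpos (hx k (hT hkpos))⟩
  rcases (hω0 i).eq_or_lt with h | h
  · rw [← h, zero_mul]
  · exact (mul_neg_of_pos_of_neg h (hx i (hT h))).le

theorem IsPSemiflow.not_drainable (hω : G.IsPSemiflow ω) (hT : {i | 0 < ω i} ⊆ T) :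
    ¬ G.Drainable T := by
  rintro ⟨-, -, L, hL, hneg⟩
  exact (hω.sum_mul_neg hT hneg).ne (hω.sum_mul_sum_map_eq_zero hL)

theorem IsPSemiflow.not_selfReplicable (hω : G.IsPSemiflow ω) (hT : {i | 0 < ω i} ⊆ T) :
    ¬ G.SelfReplicable T := by
  rintro ⟨-, -, L, hL, hpos⟩
  have := hω.sum_mul_neg hT (x := fun i => -(L.map fun r => r.2 i - r.1 i).sum)
    fun i hi => neg_neg_of_pos (hpos i hi)
  simp only [mul_neg, sum_neg_distrib, hω.sum_mul_sum_map_eq_zero hL, neg_zero] at this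
  exact this.false

theorem isSiphon_of_sum_mul_nonpos (hS : (S : Set ι) ⊆ G.species) (h0 : ∀ i ∈ S, 0 ≤ ω i)
    (hne : ∃ i ∈ S, 0 < ω i) (hle : ∀ r ∈ G.reactions, ∑ i ∈ S, ω i * (r.2 i - r.1 i) ≤ 0) :
    G.IsSiphon {i | i ∈ S ∧ 0 < ω i} := by
  refine ⟨hne, fun i hi => hS hi.1, ?_⟩
  rintro r hr ⟨i, ⟨hiS, hωi⟩, hri⟩
  -- otherwise every term of `∑ i ∈ S, ω i * (r.2 i - r.1 i)` is `≥ 0`, and the one at `i` is `> 0`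
  by_contra! hno
  refine (hle r hr).not_gt (sum_pos' (fun k hk => ?_) ⟨i, hiS, ?_⟩)
  · rcases (h0 k hk).eq_or_lt with h | h
    · rw [← h, zero_mul]
    · have := G.complexes_nonneg r.2 (G.react_mem_snd r hr) k
      exact mul_nonneg h.le (by linarith [hno k ⟨hk, h⟩])
  · exact mul_pos hωi (by linarith [hno i ⟨hiS, hωi⟩])

theorem MinimalSiphon.eq_zero_of_sum_mul_nonpos (hmin : G.MinimalSiphon S)
    (h0 : ∀ i ∈ S, 0 ≤ ω i) (hle : ∀ r ∈ G.reactions, ∑ i ∈ S, ω i * (r.2 i - r.1 i) ≤ 0)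
    {i : ι} (hi : i ∈ S) (hωi : ω i = 0) : ∀ k ∈ S, ω k = 0 := by
  by_contra! ⟨k, hk, hωk⟩
  have hsiphon := isSiphon_of_sum_mul_nonpos hmin.1.2.1 h0 ⟨k, hk, (h0 k hk).lt_of_ne' hωk⟩ hle
  have hi' : i ∈ {i | i ∈ S ∧ 0 < ω i} := (hmin.2 _ hsiphon fun _ h => h.1) ▸ hi
  exact hi'.2.ne' hωi

theorem exists_sum_mul_nonpos_of_not_selfReplicable (hne : (S : Set ι).Nonempty)
    (hS : (S : Set ι) ⊆ G.species) (h : ¬ G.SelfReplicable S) :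
    ∃ ω : ι → ℝ, (∀ i, 0 ≤ ω i) ∧ (∀ i ∉ S, ω i = 0) ∧ (∃ i ∈ S, ω i ≠ 0) ∧
      ∀ r ∈ G.reactions, ∑ i ∈ S, ω i * (r.2 i - r.1 i) ≤ 0 := by
  refine exists_sum_mul_nonpos_of_not_exists_pos S G.reactions _ ?_
  rintro ⟨v, hv, hpos⟩
  obtain ⟨n, hn⟩ := exists_nat_combination_pos S _ _ v hv hpos
  obtain ⟨L, hL, hsum⟩ := exists_list_sum_map_eq_sum_nsmul (M := ℝ) G.reactions n
  exact h ⟨hne, hS, L, hL, fun i hi => by simpa [hsum, nsmul_eq_mul] using hn i hi⟩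

theorem exists_sum_mul_nonneg_of_not_drainable (hne : (S : Set ι).Nonempty)
    (hS : (S : Set ι) ⊆ G.species) (h : ¬ G.Drainable S) :
    ∃ ω : ι → ℝ, (∀ i, 0 ≤ ω i) ∧ (∃ i ∈ S, ω i ≠ 0) ∧
      ∀ r ∈ G.reactions, 0 ≤ ∑ i ∈ S, ω i * (r.2 i - r.1 i) := by
  have hno : ¬ ∃ v : (ι → ℝ) × (ι → ℝ) → ℝ, (∀ r ∈ G.reactions, 0 ≤ v r) ∧
      ∀ i ∈ S, 0 < ∑ r ∈ G.reactions, v r * -(r.2 i - r.1 i) := by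
    rintro ⟨v, hv, hpos⟩
    obtain ⟨n, hn⟩ := exists_nat_combination_pos S _ _ v hv hpos
    obtain ⟨L, hL, hsum⟩ := exists_list_sum_map_eq_sum_nsmul (M := ℝ) G.reactions n
    exact h ⟨hne, hS, L, hL, fun i hi => by
      rw [hsum]
      simpa only [nsmul_eq_mul, mul_neg, sum_neg_distrib, neg_pos] using hn i hi⟩
  obtain ⟨ω, hω0, -, hωne, hωc⟩ := exists_sum_mul_nonpos_of_not_exists_pos S G.reactions _ hno
  refine ⟨ω, hω0, hωne, fun r hr => ?_⟩
  simpa only [mul_neg, sum_neg_distrib, neg_nonpos] using hωc r hr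

theorem MinimalSiphon.exists_isPSemiflow (hmin : G.MinimalSiphon S)
    (hd : ¬ G.Drainable S) (hs : ¬ G.SelfReplicable S) :
    ∃ ω : ι → ℝ, G.IsPSemiflow ω ∧ {i | 0 < ω i} ⊆ S := by
  have hS : S ⊆ G.species := coe_subset.1 hmin.1.2.1
  obtain ⟨ω₁, h₁, h₁S, h₁ne, h₁c⟩ :=
    exists_sum_mul_nonpos_of_not_selfReplicable hmin.1.1 hmin.1.2.1 hs
  obtain ⟨ω₂, h₂, h₂ne, h₂c⟩ := exists_sum_mul_nonneg_of_not_drainable hmin.1.1 hmin.1.2.1 hd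
  have hflow := sum_mul_eq_zero_of_rigid (fun _ h0 hle _ => hmin.eq_zero_of_sum_mul_nonpos h0 hle)
    (fun i _ => h₁ i) h₁c (fun i _ => h₂ i) h₂ne h₂c
  have hsupp : ∀ i, ω₁ i ≠ 0 → i ∈ S := fun i => not_imp_comm.1 (h₁S i)
  refine ⟨ω₁, ⟨h₁, fun i hi => hS (hsupp i hi), ?_, fun r hr => ?_⟩, fun i hi => hsupp i hi.ne'⟩
  · obtain ⟨i, -, hi⟩ := h₁ne
    exact fun h => hi (congrFun h i)
  · rw [← sum_subset hS fun i _ hi => by rw [h₁S i hi, zero_mul]]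
    exact hflow r hr

end RN

/-- Corollary 2: a reaction network has the siphon/P-semiflow property if and
only if it has no drainable siphons and no self-replicable siphons. -/
theorem siphonPSemiflow_iff_no_drainable_or_selfReplicable_siphons
    {ι : Type} (G : RN ι) :
    G.SiphonPSemiflowProperty ↔
      ∀ T : Set ι, G.IsSiphon T → ¬ G.Drainable T ∧ ¬ G.SelfReplicable T := by
  refine ⟨fun hG T hT => ?_, fun hG T hT => ?_⟩
  · obtain ⟨ω, hω, hωT⟩ := hG T hT
    exact ⟨hω.not_drainable hωT, hω.not_selfReplicable hωT⟩
  · obtain ⟨T₀, hT₀T, hmin⟩ := hT.exists_minimalSiphon_subset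
    obtain ⟨S, rfl⟩ := (G.species.finite_toSet.subset hmin.1.2.1).exists_finset_coe
    obtain ⟨ω, hω, hωS⟩ := hmin.exists_isPSemiflow (hG S hmin.1).1 (hG S hmin.1).2
    exact ⟨ω, hω, hωS.trans hT₀T⟩
end

section
/- Let G = (S, C, R) be a monomolecular reaction network. If G is consistent, i.e., there is a strictly positive vector v ∈ ℝ^m_{>0} with Nv = 0 where N is the stoichiometric matrix, then every connected component of the reaction graph (C, R) is strongly connected: for any two complexes y, y' lying in the same connected component of the underlying undirected graph, there is a directed reaction path from y to y'. -/
variable {ι : Type}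

open Classical in
/-- In a consistent monomolecular network, there is a directed path from the
product of any reaction back to its reactant. -/
lemma RN.rev_reachable {ι : Type} [DecidableEq ι] (G : RN ι)
    (hmono : G.Monomolecular) (hcons : G.Consistent) {a b : ι → ℝ}
    (hab : (a, b) ∈ G.reactions) :
    Relation.ReflTransGen (fun x y => (x, y) ∈ G.reactions) b a := by
  classical
  obtain ⟨v, hvpos, hv⟩ := hcons
  -- value of a monomolecular complex at a coordinate, as an indicator
  have hval : ∀ z ∈ G.complexes, ∀ i : ι,
      z i = if z = Pi.single i 1 then (1 : ℝ) else 0 := by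
    intro z hz i
    rcases hmono z hz with h0 | ⟨j, _, hj⟩
    · subst h0
      rw [if_neg]
      · rfl
      · intro h
        simpa using congrFun h i
    · subst hj
      by_cases hji : j = i
      · subst hji; simp
      · rw [if_neg, Pi.single_eq_of_ne (Ne.symm hji)]
        intro h
        simpa [Pi.single_eq_of_ne hji] using congrFun h j
  -- sum of coordinates over species, as an indicator of being nonzero
  have hsum : ∀ z ∈ G.complexes,
      ∑ i ∈ G.species, z i = if z = 0 then (0 : ℝ) else 1 := by
    intro z hz
    rcases hmono z hz with h0 | ⟨j, hj, hjz⟩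
    · subst h0; simp
    · subst hjz
      have hne : (Pi.single j (1 : ℝ) : ι → ℝ) ≠ 0 := by
        intro h
        simpa using congrFun h j
      rw [if_neg hne]
      have : ∀ i ∈ G.species, (Pi.single j (1 : ℝ) : ι → ℝ) i
          = if i = j then (1 : ℝ) else 0 := by
        intro i _; rw [Pi.single_apply]
      rw [Finset.sum_congr rfl this, Finset.sum_ite_eq' G.species j (fun _ => (1 : ℝ)),
        if_pos hj]
  -- flow conservation at every complex
  have hconsv : ∀ y ∈ G.complexes,
      ∑ r ∈ G.reactions, v r *
        ((if r.2 = y then (1 : ℝ) else 0) - (if r.1 = y then 1 else 0)) = 0 := by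
    intro y hy
    rcases hmono y hy with h0 | ⟨i, _, hi⟩
    · subst h0
      -- conservation at the zero complex, from summing over species
      have h1 : ∑ r ∈ G.reactions, v r *
          ((if r.2 = 0 then (1 : ℝ) else 0) - (if r.1 = 0 then 1 else 0))
          = -∑ i ∈ G.species, ∑ r ∈ G.reactions, v r * (r.2 i - r.1 i) := by
        rw [Finset.sum_comm, ← Finset.sum_neg_distrib]
        refine Finset.sum_congr rfl fun r hr => ?_
        have e2 : ∑ i ∈ G.species, (r.2 i - r.1 i)
            = (if r.1 = 0 then (1:ℝ) else 0) - (if r.2 = 0 then 1 else 0) := by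
          rw [Finset.sum_sub_distrib, hsum r.2 (G.react_mem_snd r hr),
            hsum r.1 (G.react_mem_fst r hr)]
          by_cases h1 : r.1 = 0 <;> by_cases h2 : r.2 = 0 <;>
            simp [h1, h2]
        rw [show ∑ i ∈ G.species, v r * (r.2 i - r.1 i)
            = v r * ∑ i ∈ G.species, (r.2 i - r.1 i) from (Finset.mul_sum _ _ _).symm, e2]
        ring
      rw [h1]
      simp only [neg_eq_zero]
      exact Finset.sum_eq_zero fun i _ => hv i
    · subst hi
      have h1 : ∑ r ∈ G.reactions, v r *
          ((if r.2 = Pi.single i 1 then (1 : ℝ) else 0)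
            - (if r.1 = Pi.single i 1 then 1 else 0))
          = ∑ r ∈ G.reactions, v r * (r.2 i - r.1 i) := by
        refine Finset.sum_congr rfl fun r hr => ?_
        rw [hval r.2 (G.react_mem_snd r hr) i, hval r.1 (G.react_mem_fst r hr) i]
      rw [h1]; exact hv i
  -- the cut argument
  set step : (ι → ℝ) → (ι → ℝ) → Prop := fun x y => (x, y) ∈ G.reactions with hstep
  set S : Finset (ι → ℝ) :=
    G.complexes.filter (fun z => Relation.ReflTransGen step b z) with hS
  have hbS : b ∈ S := by
    rw [hS, Finset.mem_filter]
    exact ⟨G.react_mem_snd (a, b) hab, Relation.ReflTransGen.refl⟩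
  have hclosed : ∀ r ∈ G.reactions, r.1 ∈ S → r.2 ∈ S := by
    intro r hr h1
    rw [hS, Finset.mem_filter] at h1 ⊢
    exact ⟨G.react_mem_snd r hr, h1.2.tail hr⟩
  by_contra haS'
  have haS : a ∉ S := by
    rw [hS, Finset.mem_filter]
    intro h; exact haS' h.2
  -- sum conservation over S
  have hcut : ∑ r ∈ G.reactions, v r *
      ((if r.2 ∈ S then (1 : ℝ) else 0) - (if r.1 ∈ S then 1 else 0)) = 0 := by
    have h1 : ∑ y ∈ S, ∑ r ∈ G.reactions, v r *
        ((if r.2 = y then (1 : ℝ) else 0) - (if r.1 = y then 1 else 0)) = 0 := by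
      refine Finset.sum_eq_zero fun y hy => hconsv y ?_
      rw [hS, Finset.mem_filter] at hy; exact hy.1
    rw [Finset.sum_comm] at h1
    have h2 : ∀ r ∈ G.reactions, ∑ y ∈ S, (v r * ((if r.2 = y then (1:ℝ) else 0)
        - (if r.1 = y then 1 else 0)))
        = v r * ((if r.2 ∈ S then (1:ℝ) else 0) - (if r.1 ∈ S then 1 else 0)) := by
      intro r _
      have e2 : ∑ y ∈ S, (v r * ((if r.2 = y then (1:ℝ) else 0)
          - (if r.1 = y then 1 else 0)))
          = v r * ((∑ y ∈ S, if r.2 = y then (1:ℝ) else 0)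
            - (∑ y ∈ S, if r.1 = y then (1:ℝ) else 0)) := by
        simp only [mul_sub, Finset.mul_sum, Finset.sum_sub_distrib]
      rw [e2, Finset.sum_ite_eq S r.2 (fun _ => (1:ℝ)), Finset.sum_ite_eq S r.1 (fun _ => (1:ℝ))]
    exact (Finset.sum_congr rfl h2).symm.trans h1
  have hnonneg : ∀ r ∈ G.reactions, 0 ≤ v r *
      ((if r.2 ∈ S then (1 : ℝ) else 0) - (if r.1 ∈ S then 1 else 0)) := by
    intro r hr
    by_cases h1 : r.1 ∈ S
    · rw [if_pos (hclosed r hr h1), if_pos h1]; simp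
    · rw [if_neg h1]
      by_cases h2 : r.2 ∈ S
      · rw [if_pos h2]
        have := hvpos r hr
        nlinarith
      · rw [if_neg h2]; simp
  have := (Finset.sum_eq_zero_iff_of_nonneg hnonneg).mp hcut (a, b) hab
  rw [if_pos hbS, if_neg haS] at this
  simp only [sub_zero, mul_one] at this
  exact absurd this (ne_of_gt (hvpos (a, b) hab))

/-- Proposition 3, (i) ⇒ (ii): a consistent monomolecular reaction network has
all its connected components strongly connected: any two complexes joined by an
undirected path in the reaction graph are joined by a directed reaction path. -/
theorem monomolecular_consistent_implies_strongly_connected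
    {ι : Type} [DecidableEq ι] (G : RN ι)
    (hmono : G.Monomolecular) (hcons : G.Consistent) :
    ∀ y ∈ G.complexes, ∀ y' ∈ G.complexes,
      Relation.ReflTransGen
        (fun a b => (a, b) ∈ G.reactions ∨ (b, a) ∈ G.reactions) y y' →
      Relation.ReflTransGen (fun a b => (a, b) ∈ G.reactions) y y' := by
  intro y _ y' hy' h
  clear hy'
  induction h with
  | refl => exact Relation.ReflTransGen.refl
  | tail _ hstep ih =>
    rcases hstep with h | h
    · exact ih.tail h
    · exact ih.trans (G.rev_reachable hmono hcons h)
end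

section
/- Let G = (S, C, R) be a monomolecular reaction network such that every connected component of the reaction graph (C, R) is strongly connected. Then G has the siphon/P-semiflow property: every siphon of G contains the support of a P-semiflow. -/
variable {ι : Type}

/-!
Pick a species `i₀` of the siphon `T` and let `U` be the set of complexes from which the
complex `i₀` is reachable. Going backwards along a reaction preserves having a species in a
siphon, so in a monomolecular network every complex of `U` is a single species of `T`.
Strong connectivity of the components makes every reaction reversible up to reachability,
hence `U` is closed under reactions in both directions, and the indicator of the species whose
complex lies in `U` is a P-semiflow supported in `T`.
-/

namespace RN

def Reacts (G : RN ι) (a b : ι → ℝ) : Prop := (a, b) ∈ G.reactions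

def WeaklyReversible (G : RN ι) : Prop :=
  ∀ r ∈ G.reactions, Relation.ReflTransGen G.Reacts r.2 r.1

theorem weaklyReversible_of_components_stronglyConnected {G : RN ι}
    (hsc : ∀ y ∈ G.complexes, ∀ y' ∈ G.complexes,
      Relation.ReflTransGen (fun a b => G.Reacts a b ∨ G.Reacts b a) y y' →
      Relation.ReflTransGen G.Reacts y y') :
    G.WeaklyReversible := fun r hr =>
  hsc _ (G.react_mem_snd r hr) _ (G.react_mem_fst r hr) (.single (Or.inr hr))

theorem IsSiphon.exists_pos_of_reflTransGen {G : RN ι} {T : Set ι} (hT : G.IsSiphon T)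
    {y y' : ι → ℝ} (h : Relation.ReflTransGen G.Reacts y y') (hy' : ∃ i ∈ T, 0 < y' i) :
    ∃ i ∈ T, 0 < y i := by
  induction h using Relation.ReflTransGen.head_induction_on with
  | refl => exact hy'
  | head hstep _ ih => exact hT.2.2 _ hstep ih

variable [DecidableEq ι] {G : RN ι}

theorem Monomolecular.eq_single_of_pos (hG : G.Monomolecular) {y : ι → ℝ}
    (hy : y ∈ G.complexes) {i : ι} (hi : 0 < y i) : y = Pi.single i 1 := by
  rcases hG y hy with rfl | ⟨k, -, rfl⟩
  · simp at hi
  · rcases eq_or_ne i k with rfl | hik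
    · rfl
    · simp [Pi.single_eq_of_ne hik] at hi

theorem Monomolecular.single_mem_complexes (hG : G.Monomolecular) {i : ι}
    (hi : i ∈ G.species) : Pi.single i 1 ∈ G.complexes := by
  obtain ⟨y, hy, hyi⟩ := G.species_used i hi
  rwa [← hG.eq_single_of_pos hy (lt_of_le_of_ne (G.complexes_nonneg y hy i) hyi.symm)]

theorem Monomolecular.sum_indicator_mul (hG : G.Monomolecular) {U : Set (ι → ℝ)}
    (hU0 : (0 : ι → ℝ) ∉ U) {y : ι → ℝ} (hy : y ∈ G.complexes) :
    ∑ i ∈ G.species, {j | Pi.single j (1 : ℝ) ∈ U}.indicator 1 i * y i =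
      U.indicator 1 y := by
  rcases hG y hy with rfl | ⟨k, hk, rfl⟩
  · simp [hU0]
  · rw [Finset.sum_eq_single_of_mem k hk fun j _ hjk => by simp [Pi.single_eq_of_ne hjk]]
    by_cases hkU : Pi.single k (1 : ℝ) ∈ U <;> simp [hkU]

theorem Monomolecular.isPSemiflow_indicator (hG : G.Monomolecular) {U : Set (ι → ℝ)}
    (hUC : U ⊆ G.complexes) (hU0 : (0 : ι → ℝ) ∉ U)
    (hclosed : ∀ r ∈ G.reactions, r.1 ∈ U ↔ r.2 ∈ U) {i₀ : ι}
    (hi₀ : Pi.single i₀ 1 ∈ U) :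
    G.IsPSemiflow ({j | Pi.single j (1 : ℝ) ∈ U}.indicator 1) := by
  refine ⟨fun i => Set.indicator_nonneg (fun _ _ => zero_le_one) i, fun i hi => ?_,
    fun h => ?_, fun r hr => ?_⟩
  · have hiU : i ∈ {j | Pi.single j (1 : ℝ) ∈ U} := Set.mem_of_indicator_ne_zero hi
    exact G.complexes_supp _ (hUC hiU) i (by simp)
  · simpa [Set.indicator_of_mem (show i₀ ∈ {j | Pi.single j (1 : ℝ) ∈ U} from hi₀)] using
      congrFun h i₀
  · simp only [mul_sub, Finset.sum_sub_distrib, hG.sum_indicator_mul hU0 (G.react_mem_fst r hr),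
      hG.sum_indicator_mul hU0 (G.react_mem_snd r hr)]
    by_cases h1 : r.1 ∈ U
    · simp [h1, (hclosed r hr).1 h1]
    · simp [h1, mt (hclosed r hr).2 h1]

theorem Monomolecular.siphonPSemiflowProperty (hG : G.Monomolecular)
    (hwr : G.WeaklyReversible) : G.SiphonPSemiflowProperty := by
  intro T hT
  obtain ⟨i₀, hi₀⟩ := hT.1
  set U : Set (ι → ℝ) :=
    {y | y ∈ G.complexes ∧ Relation.ReflTransGen G.Reacts y (Pi.single i₀ 1)}
  have hU_pos : ∀ y ∈ U, ∃ i ∈ T, 0 < y i := fun y hy =>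
    hT.exists_pos_of_reflTransGen hy.2 ⟨i₀, hi₀, by simp⟩
  have hclosed : ∀ r ∈ G.reactions, r.1 ∈ U ↔ r.2 ∈ U := fun r hr =>
    ⟨fun h => ⟨G.react_mem_snd r hr, (hwr r hr).trans h.2⟩,
      fun h => ⟨G.react_mem_fst r hr, .head hr h.2⟩⟩
  refine ⟨_, hG.isPSemiflow_indicator (fun _ hy => hy.1) (fun h => by simpa using hU_pos 0 h)
    hclosed ⟨hG.single_mem_complexes (hT.2.1 hi₀), .refl⟩, fun i hi => ?_⟩
  have hiU : i ∈ {j | Pi.single j (1 : ℝ) ∈ U} := Set.mem_of_indicator_ne_zero hi.out.ne'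
  obtain ⟨k, hkT, hk⟩ := hU_pos _ hiU
  rcases eq_or_ne k i with rfl | hki
  · exact hkT
  · simp [Pi.single_eq_of_ne hki] at hk

end RN

/-- Proposition 3, (ii) ⇒ (iii): a monomolecular reaction network all of whose
connected components are strongly connected has the siphon/P-semiflow
property. -/
theorem monomolecular_strongly_connected_implies_siphonPSemiflow
    {ι : Type} [DecidableEq ι] (G : RN ι)
    (hmono : G.Monomolecular)
    (hsc : ∀ y ∈ G.complexes, ∀ y' ∈ G.complexes,
      Relation.ReflTransGen
        (fun a b => (a, b) ∈ G.reactions ∨ (b, a) ∈ G.reactions) y y' →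
      Relation.ReflTransGen (fun a b => (a, b) ∈ G.reactions) y y') :
    G.SiphonPSemiflowProperty :=
  hmono.siphonPSemiflowProperty (RN.weaklyReversible_of_components_stronglyConnected hsc)
end

section
/- Let G = (S, C, R) be a reaction network and let Y ∈ S be a single intermediate species of G, i.e., {Y} satisfies: (I1) every complex of G is either supported in S∖{Y} or equals the complex Y itself, and (I2) there exist complexes y, y' ∈ C∖{Y} with y → Y ∈ R and Y → y' ∈ R. Let G* = (S*, C*, R*) be the reduction of G by removal of {Y}: R* consists of all reactions y → y' ∈ R with y, y' ≠ Y, together with all y → y' with y, y' ∈ C∖{Y}, y ≠ y', such that y → Y ∈ R and Y → y' ∈ R. Then G* is consistent if and only if G is consistent. -/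
variable {ι : Type}

private lemma sum_pair_double {β : Type*} (Y : β) (F1 F2 S : Finset (β × β))
    (w g : β × β → ℝ)
    (h1 : ∀ r ∈ F1, r.2 = Y) (h2 : ∀ s ∈ F2, s.1 = Y)
    (hw : ∀ p : β × β, w p ≠ 0 → p ∈ S ∧ (p.1, Y) ∈ F1 ∧ (Y, p.2) ∈ F2) :
    ∑ r ∈ F1, ∑ s ∈ F2, w (r.1, s.2) * g (r.1, s.2) = ∑ p ∈ S, w p * g p := by
  classical
  rw [← Finset.sum_product']
  set T := S.filter (fun p => (p.1, Y) ∈ F1 ∧ (Y, p.2) ∈ F2) with hT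
  have hrhs : ∑ p ∈ S, w p * g p = ∑ p ∈ T, w p * g p := by
    rw [hT, Finset.sum_filter_of_ne]
    intro p _ h
    exact (hw p (left_ne_zero_of_mul h)).2
  rw [hrhs]
  set e : β × β → (β × β) × (β × β) := fun p => ((p.1, Y), (Y, p.2)) with he
  have hinj : ∀ p ∈ T, ∀ q ∈ T, e p = e q → p = q := by
    intro p _ q _ h
    simp only [he, Prod.mk.injEq] at h
    exact Prod.ext h.1.1 h.2.2
  have himg : ∑ p ∈ T, w p * g p = ∑ x ∈ T.image e, w (x.1.1, x.2.2) * g (x.1.1, x.2.2) := by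
    rw [Finset.sum_image hinj]
  rw [himg]
  refine (Finset.sum_subset ?_ ?_).symm
  · intro x hx
    obtain ⟨p, hp, rfl⟩ := Finset.mem_image.mp hx
    rw [hT, Finset.mem_filter] at hp
    exact Finset.mem_product.mpr ⟨hp.2.1, hp.2.2⟩
  · intro x hx hnx
    by_contra h
    have hw' := hw (x.1.1, x.2.2) (left_ne_zero_of_mul h)
    have hmem : (x.1.1, x.2.2) ∈ T := by
      rw [hT, Finset.mem_filter]
      exact ⟨hw'.1, hw'.2⟩
    apply hnx
    rw [Finset.mem_image]
    refine ⟨(x.1.1, x.2.2), hmem, ?_⟩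
    have h1' : x.1.2 = Y := h1 x.1 (Finset.mem_product.mp hx).1
    have h2' : x.2.1 = Y := h2 x.2 (Finset.mem_product.mp hx).2
    simp only [he]
    exact Prod.ext (Prod.ext rfl h1'.symm) (Prod.ext h2'.symm rfl)


/-- Lemma 9: consistency is preserved by the removal of a single intermediate
species.  If `{Y}` is a set of intermediates of `G` (conditions (I1) and (I2))
and `G'` is the reduction of `G` by removal of `{Y}`, then `G'` is consistent
if and only if `G` is consistent. -/
theorem consistent_iff_consistent_of_single_intermediate_removal
    {ι : Type} [DecidableEq ι] (G G' : RN ι) (yI : ι) (hyI : yI ∈ G.species)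
    (hI1 : ∀ y ∈ G.complexes, y yI = 0 ∨ y = Pi.single yI (1 : ℝ))
    (hI2 : ∃ y ∈ G.complexes, ∃ y' ∈ G.complexes, y yI = 0 ∧ y' yI = 0 ∧
      (y, Pi.single yI (1 : ℝ)) ∈ G.reactions ∧
      (Pi.single yI (1 : ℝ), y') ∈ G.reactions)
    (hred : ∀ p : (ι → ℝ) × (ι → ℝ), p ∈ G'.reactions ↔
      (p.1 ∈ G.complexes ∧ p.2 ∈ G.complexes ∧ p.1 yI = 0 ∧ p.2 yI = 0 ∧
        (p ∈ G.reactions ∨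
          (p.1 ≠ p.2 ∧ (p.1, Pi.single yI (1 : ℝ)) ∈ G.reactions ∧
            (Pi.single yI (1 : ℝ), p.2) ∈ G.reactions)))) :
    G'.Consistent ↔ G.Consistent := by
  classical
  set Y : ι → ℝ := Pi.single yI (1 : ℝ) with hYdef
  have hY1 : Y yI = 1 := Pi.single_eq_same yI 1
  have hne : ∀ z : ι → ℝ, z yI = 0 → z ≠ Y := by
    intro z hz h
    rw [h, hY1] at hz
    exact one_ne_zero hz
  have hoff1 : ∀ r ∈ G.reactions, r.1 ≠ Y → r.1 yI = 0 := by
    intro r hr h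
    rcases hI1 r.1 (G.react_mem_fst r hr) with h0 | h0
    · exact h0
    · exact absurd h0 h
  have hoff2 : ∀ r ∈ G.reactions, r.2 ≠ Y → r.2 yI = 0 := by
    intro r hr h
    rcases hI1 r.2 (G.react_mem_snd r hr) with h0 | h0
    · exact h0
    · exact absurd h0 h
  set F1 := G.reactions.filter (fun r => r.2 = Y) with hF1def
  set F2 := G.reactions.filter (fun r => r.1 = Y) with hF2def
  set R0 := G.reactions.filter (fun r => ¬ r.2 = Y ∧ ¬ r.1 = Y) with hR0def
  -- every F1 member has first component off Y, etc.
  have hF1off : ∀ r ∈ F1, r.1 yI = 0 := by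
    intro r hr
    rw [hF1def, Finset.mem_filter] at hr
    refine hoff1 r hr.1 ?_
    intro h
    exact G.no_loops r hr.1 (h.trans hr.2.symm)
  have hF2off : ∀ s ∈ F2, s.2 yI = 0 := by
    intro s hs
    rw [hF2def, Finset.mem_filter] at hs
    refine hoff2 s hs.1 ?_
    intro h
    exact G.no_loops s hs.1 (hs.2.trans h.symm)
  have hF1eq : ∀ r ∈ F1, r = (r.1, Y) := by
    intro r hr
    rw [hF1def, Finset.mem_filter] at hr
    exact Prod.ext rfl hr.2
  have hF2eq : ∀ s ∈ F2, s = (Y, s.2) := by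
    intro s hs
    rw [hF2def, Finset.mem_filter] at hs
    exact Prod.ext hs.2 rfl
  have hbridge : ∀ a b : ι → ℝ, (a, Y) ∈ G.reactions → (Y, b) ∈ G.reactions → a ≠ b →
      (a, b) ∈ G'.reactions := by
    intro a b h1 h2 hab
    refine (hred (a, b)).mpr ⟨G.react_mem_fst (a, Y) h1, G.react_mem_snd (Y, b) h2, ?_, ?_, Or.inr ⟨hab, h1, h2⟩⟩
    · exact hoff1 (a, Y) h1 (fun h => G.no_loops (a, Y) h1 h)
    · exact hoff2 (Y, b) h2 (fun h => G.no_loops (Y, b) h2 h.symm)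
  have hR0eq : R0 = G'.reactions.filter (fun p => p ∈ G.reactions) := by
    ext p
    rw [hR0def, Finset.mem_filter, Finset.mem_filter]
    constructor
    · rintro ⟨hp, h2, h1⟩
      refine ⟨(hred p).mpr ⟨G.react_mem_fst p hp, G.react_mem_snd p hp,
        hoff1 p hp h1, hoff2 p hp h2, Or.inl hp⟩, hp⟩
    · rintro ⟨hp', hp⟩
      obtain ⟨_, _, o1, o2, _⟩ := (hred p).mp hp'
      exact ⟨hp, hne p.2 o2, hne p.1 o1⟩
  have hF2alt : (G.reactions.filter (fun r => ¬ r.2 = Y)).filter (fun r => r.1 = Y) = F2 := by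
    rw [Finset.filter_filter, hF2def]
    ext r
    rw [Finset.mem_filter, Finset.mem_filter]
    constructor
    · rintro ⟨hr, _, h1⟩; exact ⟨hr, h1⟩
    · rintro ⟨hr, h1⟩
      refine ⟨hr, ?_, h1⟩
      intro h2
      exact G.no_loops r hr (h1.trans h2.symm)
  have hsplit : ∀ f : (ι → ℝ) × (ι → ℝ) → ℝ,
      ∑ r ∈ G.reactions, f r = ∑ r ∈ F1, f r + (∑ s ∈ F2, f s + ∑ r ∈ R0, f r) := by
    intro f
    rw [← Finset.sum_filter_add_sum_filter_not G.reactions (fun r => r.2 = Y) f]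
    rw [← hF1def]
    congr 1
    rw [← Finset.sum_filter_add_sum_filter_not (G.reactions.filter (fun r => ¬ r.2 = Y))
      (fun r => r.1 = Y) f, hF2alt]
    congr 1
    rw [Finset.filter_filter, hR0def]
  constructor
  · rintro ⟨v', hv'pos, hflux'⟩
    have hF1mem : ∀ r ∈ F1, r ∈ G.reactions ∧ r.2 = Y := by
      intro r hr; rw [hF1def, Finset.mem_filter] at hr; exact hr
    have hF2mem : ∀ s ∈ F2, s ∈ G.reactions ∧ s.1 = Y := by
      intro s hs; rw [hF2def, Finset.mem_filter] at hs; exact hs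
    set w : (ι → ℝ) × (ι → ℝ) → ℝ := fun p =>
      if p ∈ G'.reactions ∧ (p.1, Y) ∈ G.reactions ∧ (Y, p.2) ∈ G.reactions then
        (if p ∈ G.reactions then v' p / 2 else v' p) else 0 with hwdef
    set d : (ι → ℝ) × (ι → ℝ) → ℝ := fun p =>
      if p ∈ G'.reactions ∧ p ∈ G.reactions then
        (if (p.1, Y) ∈ G.reactions ∧ (Y, p.2) ∈ G.reactions then v' p / 2 else v' p) else 0
      with hddef
    set v : (ι → ℝ) × (ι → ℝ) → ℝ := fun p =>
      if p.2 = Y then (∑ s ∈ F2, w (p.1, s.2)) + (if (Y, p.1) ∈ G.reactions then 1 else 0)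
      else if p.1 = Y then (∑ r ∈ F1, w (r.1, p.2)) + (if (p.2, Y) ∈ G.reactions then 1 else 0)
      else d p with hvdef
    have hwnn : ∀ p, 0 ≤ w p := by
      intro p
      simp only [hwdef]
      split_ifs with h h'
      · linarith [hv'pos p h.1]
      · exact (hv'pos p h.1).le
      · exact le_refl 0
    have hpath : ∀ p ∈ G'.reactions, p ∉ G.reactions →
        (p.1, Y) ∈ G.reactions ∧ (Y, p.2) ∈ G.reactions := by
      intro p hp hnp
      rcases (hred p).mp hp with ⟨_, _, _, _, hor⟩
      rcases hor with h | h
      · exact absurd h hnp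
      · exact ⟨h.2.1, h.2.2⟩
    have hdw : ∀ p ∈ G'.reactions, w p + d p = v' p := by
      intro p hp
      by_cases hm : p ∈ G.reactions
      · by_cases hq : (p.1, Y) ∈ G.reactions ∧ (Y, p.2) ∈ G.reactions
        · have e1 : w p = v' p / 2 := by
            simp only [hwdef]; rw [if_pos ⟨hp, hq.1, hq.2⟩, if_pos hm]
          have e2 : d p = v' p / 2 := by
            simp only [hddef]; rw [if_pos ⟨hp, hm⟩, if_pos hq]
          rw [e1, e2]; ring
        · have e1 : w p = 0 := by
            simp only [hwdef]; rw [if_neg (fun h => hq ⟨h.2.1, h.2.2⟩)]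
          have e2 : d p = v' p := by
            simp only [hddef]; rw [if_pos ⟨hp, hm⟩, if_neg hq]
          rw [e1, e2]; ring
      · have hq := hpath p hp hm
        have e1 : w p = v' p := by
          simp only [hwdef]; rw [if_pos ⟨hp, hq.1, hq.2⟩, if_neg hm]
        have e2 : d p = 0 := by
          simp only [hddef]; rw [if_neg (fun h => hm h.2)]
        rw [e1, e2]; ring
    have hwpos' : ∀ p : (ι → ℝ) × (ι → ℝ), p ∈ G'.reactions → (p.1, Y) ∈ G.reactions →
        (Y, p.2) ∈ G.reactions → 0 < w p := by
      intro p hp h1 h2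
      simp only [hwdef]
      rw [if_pos ⟨hp, h1, h2⟩]
      split_ifs with h
      · linarith [hv'pos p hp]
      · exact hv'pos p hp
    refine ⟨v, ?_, ?_⟩
    · intro r hr
      simp only [hvdef]
      obtain ⟨y0, _, y1, _, _, _, hin0, hout0⟩ := hI2
      by_cases h2 : r.2 = Y
      · rw [if_pos h2]
        have hr1Y : (r.1, Y) ∈ G.reactions := by
          have : r = (r.1, Y) := Prod.ext rfl h2
          rw [← this]; exact hr
        have hcycnn : (0:ℝ) ≤ if (Y, r.1) ∈ G.reactions then 1 else 0 := by
          split_ifs <;> norm_num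
        by_cases hb : y1 = r.1
        · have hsumnn : 0 ≤ ∑ s ∈ F2, w (r.1, s.2) :=
            Finset.sum_nonneg (fun s _ => hwnn _)
          rw [if_pos (by rw [← hb]; exact hout0)]
          linarith
        · have hmem : (r.1, y1) ∈ G'.reactions :=
            hbridge r.1 y1 hr1Y hout0 (fun h => hb h.symm)
          have hwp : 0 < w (r.1, y1) := hwpos' (r.1, y1) hmem hr1Y hout0
          have hsumpos : 0 < ∑ s ∈ F2, w (r.1, s.2) := by
            refine Finset.sum_pos' (fun s _ => hwnn _) ⟨(Y, y1), ?_, hwp⟩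
            rw [hF2def, Finset.mem_filter]; exact ⟨hout0, rfl⟩
          linarith
      · rw [if_neg h2]
        by_cases h1 : r.1 = Y
        · rw [if_pos h1]
          have hr2Y : (Y, r.2) ∈ G.reactions := by
            have : r = (Y, r.2) := Prod.ext h1 rfl
            rw [← this]; exact hr
          have hcycnn : (0:ℝ) ≤ if (r.2, Y) ∈ G.reactions then 1 else 0 := by
            split_ifs <;> norm_num
          by_cases hb : y0 = r.2
          · have hsumnn : 0 ≤ ∑ s ∈ F1, w (s.1, r.2) :=
              Finset.sum_nonneg (fun s _ => hwnn _)
            rw [if_pos (by rw [← hb]; exact hin0)]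
            linarith
          · have hmem : (y0, r.2) ∈ G'.reactions :=
              hbridge y0 r.2 hin0 hr2Y hb
            have hwp : 0 < w (y0, r.2) := hwpos' (y0, r.2) hmem hin0 hr2Y
            have hsumpos : 0 < ∑ s ∈ F1, w (s.1, r.2) := by
              refine Finset.sum_pos' (fun s _ => hwnn _) ⟨(y0, Y), ?_, hwp⟩
              rw [hF1def, Finset.mem_filter]; exact ⟨hin0, rfl⟩
            linarith
        · rw [if_neg h1]
          have hr' : r ∈ G'.reactions := (hred r).mpr ⟨G.react_mem_fst r hr,
            G.react_mem_snd r hr, hoff1 r hr h1, hoff2 r hr h2, Or.inl hr⟩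
          simp only [hddef]
          rw [if_pos ⟨hr', hr⟩]
          split_ifs with h
          · linarith [hv'pos r hr']
          · exact hv'pos r hr'
    · intro i
      rw [hsplit (fun r => v r * (r.2 i - r.1 i))]
      have hT1 : ∑ r ∈ F1, v r * (r.2 i - r.1 i)
          = (∑ r ∈ F1, ∑ s ∈ F2, w (r.1, s.2) * (Y i - r.1 i))
            + ∑ r ∈ F1, (if (Y, r.1) ∈ G.reactions then (Y i - r.1 i) else 0) := by
        rw [← Finset.sum_add_distrib]
        refine Finset.sum_congr rfl (fun r hr => ?_)
        simp only [hvdef]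
        rw [if_pos (hF1mem r hr).2, (hF1mem r hr).2, add_mul, Finset.sum_mul]
        congr 1
        split_ifs <;> ring
      have hT2 : ∑ s ∈ F2, v s * (s.2 i - s.1 i)
          = (∑ s ∈ F2, ∑ r ∈ F1, w (r.1, s.2) * (s.2 i - Y i))
            + ∑ s ∈ F2, (if (s.2, Y) ∈ G.reactions then (s.2 i - Y i) else 0) := by
        rw [← Finset.sum_add_distrib]
        refine Finset.sum_congr rfl (fun s hs => ?_)
        have hs2 : ¬ s.2 = Y := fun h =>
          G.no_loops s (hF2mem s hs).1 ((hF2mem s hs).2.trans h.symm)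
        simp only [hvdef]
        rw [if_neg hs2, if_pos (hF2mem s hs).2, (hF2mem s hs).2, add_mul, Finset.sum_mul]
        congr 1
        split_ifs <;> ring
      have hD : (∑ r ∈ F1, ∑ s ∈ F2, w (r.1, s.2) * (Y i - r.1 i))
            + (∑ s ∈ F2, ∑ r ∈ F1, w (r.1, s.2) * (s.2 i - Y i))
          = ∑ p ∈ G'.reactions, w p * (p.2 i - p.1 i) := by
        rw [Finset.sum_comm (s := F2) (t := F1)
          (f := fun s r => w (r.1, s.2) * (s.2 i - Y i)), ← Finset.sum_add_distrib]
        have step : ∀ r ∈ F1, (∑ s ∈ F2, w (r.1, s.2) * (Y i - r.1 i))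
            + (∑ s ∈ F2, w (r.1, s.2) * (s.2 i - Y i))
            = ∑ s ∈ F2, w (r.1, s.2) * ((r.1, s.2).2 i - (r.1, s.2).1 i) := by
          intro r _
          rw [← Finset.sum_add_distrib]
          refine Finset.sum_congr rfl (fun s _ => ?_)
          show _ = w (r.1, s.2) * (s.2 i - r.1 i)
          ring
        rw [Finset.sum_congr rfl step]
        refine sum_pair_double Y F1 F2 G'.reactions w (fun p => p.2 i - p.1 i)
          (fun r hr => (hF1mem r hr).2) (fun s hs => (hF2mem s hs).2) ?_
        intro p hp
        simp only [hwdef] at hp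
        by_cases h : p ∈ G'.reactions ∧ (p.1, Y) ∈ G.reactions ∧ (Y, p.2) ∈ G.reactions
        · refine ⟨h.1, ?_, ?_⟩
          · rw [hF1def, Finset.mem_filter]; exact ⟨h.2.1, rfl⟩
          · rw [hF2def, Finset.mem_filter]; exact ⟨h.2.2, rfl⟩
        · exact absurd (if_neg h) hp
      have hC : (∑ r ∈ F1, (if (Y, r.1) ∈ G.reactions then (Y i - r.1 i) else 0))
            + (∑ s ∈ F2, (if (s.2, Y) ∈ G.reactions then (s.2 i - Y i) else 0)) = 0 := by
        rw [← Finset.sum_filter (fun r : (ι → ℝ) × (ι → ℝ) => (Y, r.1) ∈ G.reactions)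
            (fun r : (ι → ℝ) × (ι → ℝ) => Y i - r.1 i),
          ← Finset.sum_filter (fun s : (ι → ℝ) × (ι → ℝ) => (s.2, Y) ∈ G.reactions)
            (fun s : (ι → ℝ) × (ι → ℝ) => s.2 i - Y i)]
        have c3 : ∑ s ∈ F2.filter (fun s => (s.2, Y) ∈ G.reactions), (s.2 i - Y i)
            = ∑ r ∈ F1.filter (fun r => (Y, r.1) ∈ G.reactions), (r.1 i - Y i) := by
          refine Finset.sum_nbij' (fun s => (s.2, Y)) (fun r => (Y, r.1)) ?_ ?_ ?_ ?_ ?_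
          · intro s hs
            rw [Finset.mem_filter] at hs ⊢
            obtain ⟨hsF2, hsc⟩ := hs
            constructor
            · rw [hF1def, Finset.mem_filter]; exact ⟨hsc, rfl⟩
            · show (Y, s.2) ∈ G.reactions
              rw [← hF2eq s hsF2]; exact (hF2mem s hsF2).1
          · intro r hr
            rw [Finset.mem_filter] at hr ⊢
            obtain ⟨hrF1, hrc⟩ := hr
            constructor
            · rw [hF2def, Finset.mem_filter]; exact ⟨hrc, rfl⟩
            · show (r.1, Y) ∈ G.reactions
              rw [← hF1eq r hrF1]; exact (hF1mem r hrF1).1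
          · intro s hs
            rw [Finset.mem_filter] at hs
            exact (hF2eq s hs.1).symm
          · intro r hr
            rw [Finset.mem_filter] at hr
            exact (hF1eq r hr.1).symm
          · intro s _
            rfl
        rw [c3, ← Finset.sum_add_distrib]
        exact Finset.sum_eq_zero (fun r _ => by ring)
      have hT3 : ∑ r ∈ R0, v r * (r.2 i - r.1 i)
          = ∑ p ∈ G'.reactions, d p * (p.2 i - p.1 i) := by
        have e0 : ∑ r ∈ R0, v r * (r.2 i - r.1 i) = ∑ r ∈ R0, d r * (r.2 i - r.1 i) := by
          refine Finset.sum_congr rfl (fun r hr => ?_)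
          rw [hR0def, Finset.mem_filter] at hr
          simp only [hvdef]
          rw [if_neg hr.2.1, if_neg hr.2.2]
        rw [e0, hR0eq]
        refine Finset.sum_filter_of_ne ?_
        intro p hp h
        have hd := left_ne_zero_of_mul h
        simp only [hddef] at hd
        by_cases hc : p ∈ G'.reactions ∧ p ∈ G.reactions
        · exact hc.2
        · exact absurd (if_neg hc) hd
      rw [hT1, hT2, hT3]
      have hfin : (∑ p ∈ G'.reactions, w p * (p.2 i - p.1 i))
          + ∑ p ∈ G'.reactions, d p * (p.2 i - p.1 i) = 0 := by
        rw [← Finset.sum_add_distrib]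
        rw [Finset.sum_congr rfl (fun p hp => by rw [← hdw p hp]; ring :
          ∀ p ∈ G'.reactions, w p * (p.2 i - p.1 i) + d p * (p.2 i - p.1 i)
            = v' p * (p.2 i - p.1 i))]
        exact hflux' i
      linarith [hD, hC, hfin]
  · rintro ⟨v, hvpos, hflux⟩
    have hF1mem : ∀ r ∈ F1, r ∈ G.reactions ∧ r.2 = Y := by
      intro r hr; rw [hF1def, Finset.mem_filter] at hr; exact hr
    have hF2mem : ∀ s ∈ F2, s ∈ G.reactions ∧ s.1 = Y := by
      intro s hs; rw [hF2def, Finset.mem_filter] at hs; exact hs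
    set A := ∑ r ∈ F1, v r with hAdef
    set B := ∑ s ∈ F2, v s with hBdef
    have hF1sum : ∑ r ∈ F1, v r * (r.2 yI - r.1 yI) = A := by
      rw [hAdef]
      refine Finset.sum_congr rfl (fun r hr => ?_)
      rw [(hF1mem r hr).2, hY1, hF1off r hr]
      ring
    have hF2sum : ∑ s ∈ F2, v s * (s.2 yI - s.1 yI) = -B := by
      rw [hBdef, ← Finset.sum_neg_distrib]
      refine Finset.sum_congr rfl (fun s hs => ?_)
      rw [(hF2mem s hs).2, hY1, hF2off s hs]
      ring
    have hAB : A = B := by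
      have h0 := hflux yI
      rw [hsplit (fun r => v r * (r.2 yI - r.1 yI))] at h0
      have hR0z : ∑ r ∈ R0, v r * (r.2 yI - r.1 yI) = 0 := by
        refine Finset.sum_eq_zero (fun r hr => ?_)
        rw [hR0def, Finset.mem_filter] at hr
        rw [hoff1 r hr.1 hr.2.2, hoff2 r hr.1 hr.2.1]
        ring
      rw [hF1sum, hF2sum, hR0z] at h0
      linarith
    have hApos : 0 < A := by
      obtain ⟨y, _, y', _, _, _, hin, _⟩ := hI2
      refine Finset.sum_pos (fun r hr => hvpos r (hF1mem r hr).1) ?_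
      exact ⟨(y, Y), by rw [hF1def, Finset.mem_filter]; exact ⟨hin, rfl⟩⟩
    have hAne : A ≠ 0 := ne_of_gt hApos
    set w : (ι → ℝ) × (ι → ℝ) → ℝ := fun p =>
      if p ∈ G'.reactions ∧ (p.1, Y) ∈ G.reactions ∧ (Y, p.2) ∈ G.reactions then
        v (p.1, Y) * v (Y, p.2) / A else 0 with hwdef
    set v' : (ι → ℝ) × (ι → ℝ) → ℝ := fun p =>
      (if p ∈ G.reactions then v p else 0) + w p with hv'def
    have hwnn : ∀ p, 0 ≤ w p := by
      intro p
      simp only [hwdef]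
      split_ifs with h
      · exact div_nonneg (mul_nonneg (hvpos _ h.2.1).le (hvpos _ h.2.2).le) hApos.le
      · exact le_refl 0
    refine ⟨v', ?_, ?_⟩
    · intro p hp
      rcases (hred p).mp hp with ⟨_, _, _, _, hor⟩
      show (0:ℝ) < (if p ∈ G.reactions then v p else 0) + w p
      rcases hor with hmem | ⟨hne', h1, h2⟩
      · have h1 : (0:ℝ) < if p ∈ G.reactions then v p else 0 := by
          rw [if_pos hmem]; exact hvpos p hmem
        have := hwnn p
        linarith
      · have hwpos : 0 < w p := by
          simp only [hwdef]
          rw [if_pos ⟨hp, h1, h2⟩]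
          exact div_pos (mul_pos (hvpos _ h1) (hvpos _ h2)) hApos
        have : (0:ℝ) ≤ if p ∈ G.reactions then v p else 0 := by
          split_ifs with h
          · exact (hvpos p h).le
          · exact le_refl 0
        linarith
    · intro i
      have hexp : ∀ p, v' p * (p.2 i - p.1 i)
          = (if p ∈ G.reactions then v p else 0) * (p.2 i - p.1 i) + w p * (p.2 i - p.1 i) := by
        intro p; simp only [hv'def]; ring
      simp only [hexp]
      rw [Finset.sum_add_distrib]
      set P := ∑ r ∈ F1, v r * r.1 i with hPdef
      set Q := ∑ s ∈ F2, v s * s.2 i with hQdef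
      have part1 : ∑ p ∈ G'.reactions, (if p ∈ G.reactions then v p else 0) * (p.2 i - p.1 i)
          = ∑ r ∈ R0, v r * (r.2 i - r.1 i) := by
        rw [hR0eq, Finset.sum_filter]
        refine Finset.sum_congr rfl (fun p _ => ?_)
        split_ifs <;> simp
      have part2 : ∑ p ∈ G'.reactions, w p * (p.2 i - p.1 i) = Q - P := by
        rw [← sum_pair_double Y F1 F2 G'.reactions w (fun p => p.2 i - p.1 i)
          (fun r hr => (hF1mem r hr).2) (fun s hs => (hF2mem s hs).2) ?_]
        · have step : ∑ r ∈ F1, ∑ s ∈ F2, w (r.1, s.2) * ((r.1, s.2).2 i - (r.1, s.2).1 i)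
              = ∑ r ∈ F1, ∑ s ∈ F2, (v r * v s / A) * (s.2 i - r.1 i) := by
            refine Finset.sum_congr rfl (fun r hr => Finset.sum_congr rfl (fun s hs => ?_))
            have hrR : r ∈ G.reactions := (hF1mem r hr).1
            have hsR : s ∈ G.reactions := (hF2mem s hs).1
            by_cases hd : r.1 = s.2
            · simp only [hd, sub_self, mul_zero]
            · have hmem : (r.1, s.2) ∈ G'.reactions := by
                refine hbridge r.1 s.2 ?_ ?_ hd
                · rw [← hF1eq r hr]; exact hrR
                · rw [← hF2eq s hs]; exact hsR
              simp only [hwdef]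
              rw [if_pos ⟨hmem, by rw [← hF1eq r hr]; exact hrR, by rw [← hF2eq s hs]; exact hsR⟩]
              rw [← hF1eq r hr, ← hF2eq s hs]
          rw [step]
          have expand : ∀ r, ∑ s ∈ F2, (v r * v s / A) * (s.2 i - r.1 i)
              = (v r / A) * Q - (v r * r.1 i / A) * B := by
            intro r
            rw [hQdef, hBdef, Finset.mul_sum, Finset.mul_sum, ← Finset.sum_sub_distrib]
            refine Finset.sum_congr rfl (fun s _ => ?_)
            ring
          simp only [expand]
          rw [← hAB, Finset.sum_sub_distrib]
          have e1 : ∑ r ∈ F1, (v r / A) * Q = Q := by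
            rw [← Finset.sum_mul, ← Finset.sum_div, ← hAdef, div_self hAne, one_mul]
          have e2 : ∑ r ∈ F1, (v r * r.1 i / A) * A = P := by
            rw [hPdef]
            refine Finset.sum_congr rfl (fun r _ => ?_)
            field_simp
          rw [e1, e2]
        · intro p hp
          simp only [hwdef] at hp
          by_cases h : p ∈ G'.reactions ∧ (p.1, Y) ∈ G.reactions ∧ (Y, p.2) ∈ G.reactions
          · refine ⟨h.1, ?_, ?_⟩
            · rw [hF1def, Finset.mem_filter]; exact ⟨h.2.1, rfl⟩
            · rw [hF2def, Finset.mem_filter]; exact ⟨h.2.2, rfl⟩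
          · exact absurd (if_neg h) hp
      rw [part1, part2]
      have h0 := hflux i
      rw [hsplit (fun r => v r * (r.2 i - r.1 i))] at h0
      have hF1i : ∑ r ∈ F1, v r * (r.2 i - r.1 i) = A * Y i - P := by
        rw [hAdef, hPdef, Finset.sum_mul, ← Finset.sum_sub_distrib]
        refine Finset.sum_congr rfl (fun r hr => ?_)
        rw [(hF1mem r hr).2]
        ring
      have hF2i : ∑ s ∈ F2, v s * (s.2 i - s.1 i) = Q - B * Y i := by
        rw [hBdef, hQdef, Finset.sum_mul, ← Finset.sum_sub_distrib]
        refine Finset.sum_congr rfl (fun s hs => ?_)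
        rw [(hF2mem s hs).2]
        ring
      rw [hF1i, hF2i, hAB] at h0
      linarith
end

section
/- Let G = (S, C, R) be a reaction network with a set of intermediate species Y ⊆ S (satisfying (I1) and (I2)), and let G* be the reduction of G by removal of Y. If G is conservative, then G* is conservative. Conversely, if G* is conservative and the zero complex 0 does not belong to C, then G is conservative. -/
variable {ι : Type}

/-!
A positive conservation law of `G` is constant along every reaction path of `G`, so it is also
one of the reduction `G'`. Conversely, a positive conservation law `ω` of `G'` extends to `G` by
giving the intermediate `j` the weight `ω · t`, where `t` is a non-intermediate complex reachable
from `j` through intermediates. Any non-intermediate complex from which `j` is reachable is joined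
to `t` by a reaction of `G'` (or equals it), so it has the same weight; hence every reaction of
`G` preserves the extended weight. It is positive because `t ≠ 0`.
-/

open Finset

lemma Finset.sum_mul_sub_eq_zero_iff (s : Finset ι) (ω a b : ι → ℝ) :
    ∑ i ∈ s, ω i * (b i - a i) = 0 ↔ ∑ i ∈ s, ω i * a i = ∑ i ∈ s, ω i * b i := by
  simp only [mul_sub, sum_sub_distrib, sub_eq_zero]
  exact eq_comm

lemma sum_piecewise_mul_of_offSet [DecidableEq ι] {Y : Finset ι}
    (s : Finset ι) (c ω : ι → ℝ) {z : ι → ℝ} (hz : OffSet Y z) :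
    ∑ i ∈ s, Y.piecewise c ω i * z i = ∑ i ∈ s, ω i * z i := by
  refine sum_congr rfl fun i _ => ?_
  by_cases hi : i ∈ Y
  · simp [hz i hi]
  · rw [piecewise_eq_of_notMem _ _ _ hi]

lemma Finset.sum_mul_single_one [DecidableEq ι] {s : Finset ι} {j : ι} (hj : j ∈ s)
    (ω : ι → ℝ) : ∑ i ∈ s, ω i * (Pi.single j 1 : ι → ℝ) i = ω j := by
  simp [Pi.single_apply, hj]

namespace RN

def Conserves (G : RN ι) (F : (ι → ℝ) → ℝ) : Prop :=
  ∀ r ∈ G.reactions, F r.1 = F r.2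

variable {G G' : RN ι} {A : Set (ι → ℝ)} {y y' z : ι → ℝ}

lemma sum_species_mul_eq_of_subset (G : RN ι) {s : Finset ι} (hs : G.species ⊆ s)
    (hy : y ∈ G.complexes) (ω : ι → ℝ) :
    ∑ i ∈ G.species, ω i * y i = ∑ i ∈ s, ω i * y i :=
  sum_subset hs fun i _ hi => by
    rw [not_not.1 (mt (G.complexes_supp y hy i) hi), mul_zero]

lemma sum_species_mul_pos (hy : y ∈ G.complexes) (hy0 : y ≠ 0) {ω : ι → ℝ}
    (hω : ∀ i, 0 < ω i) : 0 < ∑ i ∈ G.species, ω i * y i := by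
  obtain ⟨k, hk⟩ := Function.ne_iff.1 hy0
  have hyk : 0 < y k := (G.complexes_nonneg y hy k).lt_of_ne' hk
  exact sum_pos' (fun i _ => mul_nonneg (hω i).le (G.complexes_nonneg y hy i))
    ⟨k, G.complexes_supp y hy k hk, mul_pos (hω k) hyk⟩

lemma conservative_iff_exists_pos_conserves (G : RN ι) {s : Finset ι} (hs : G.species ⊆ s) :
    G.Conservative ↔
      ∃ ω : ι → ℝ, (∀ i, 0 < ω i) ∧ G.Conserves fun y => ∑ i ∈ s, ω i * y i := by
  have hsum : ∀ ω : ι → ℝ, ∀ r ∈ G.reactions, ∑ i ∈ G.species, ω i * (r.2 i - r.1 i) = 0 ↔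
      ∑ i ∈ s, ω i * r.1 i = ∑ i ∈ s, ω i * r.2 i := fun ω r hr => by
    rw [sum_mul_sub_eq_zero_iff, G.sum_species_mul_eq_of_subset hs (G.react_mem_fst r hr),
      G.sum_species_mul_eq_of_subset hs (G.react_mem_snd r hr)]
  constructor
  · rintro ⟨ω, hpos, hω⟩
    classical
    refine ⟨G.species.piecewise ω 1, fun i => ?_, fun r hr => (hsum _ r hr).1 ?_⟩
    · by_cases hi : i ∈ G.species
      · simpa [hi] using hpos i hi
      · simp [hi]
    · rw [← hω r hr]
      exact sum_congr rfl fun i hi => by rw [piecewise_eq_of_mem _ _ _ hi]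
  · rintro ⟨ω, hpos, hω⟩
    exact ⟨ω, fun i _ => hpos i, fun r hr => (hsum ω r hr).2 (hω r hr)⟩

namespace PathThrough

lemma of_mem_reactions (hr : (y, y') ∈ G.reactions) : G.PathThrough A y y' :=
  ⟨[], by simp, .cons_cons hr (.singleton _)⟩

lemma trans (hz : z ∈ A) (h₁ : G.PathThrough A y z) (h₂ : G.PathThrough A z y') :
    G.PathThrough A y y' := by
  obtain ⟨L₁, hL₁, hc₁⟩ := h₁
  obtain ⟨L₂, hL₂, hc₂⟩ := h₂
  refine ⟨L₁ ++ z :: L₂, ?_, ?_⟩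
  · simp only [List.mem_append, List.mem_cons]
    rintro x (hx | rfl | hx)
    exacts [hL₁ x hx, hz, hL₂ x hx]
  · rw [List.append_assoc, List.cons_append]
    exact List.isChain_cons_split.2 ⟨hc₁, hc₂⟩

end PathThrough

lemma Conserves.eq_of_pathThrough {F : (ι → ℝ) → ℝ} (hF : G.Conserves F)
    (h : G.PathThrough A y y') : F y = F y' := by
  obtain ⟨L, -, hL⟩ := h
  have hpath := List.relationReflTransGen_of_exists_isChain_cons (b := y') _ hL (by simp)
  clear hL
  induction hpath with
  | refl => rfl
  | tail _ hab ih => exact ih.trans (hF _ hab)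

section Intermediates

variable [DecidableEq ι] {Y : Finset ι}

lemma IsIntermediateSet.exists_exit (hY : G.IsIntermediateSet Y) {j : ι} (hj : j ∈ Y) :
    ∃ t ∈ G.complexes, OffSet Y t ∧ G.PathThrough {z | InterCplx Y z} (Pi.single j 1) t := by
  obtain ⟨_, _, t, ht, _, htY, _, hjt⟩ := hY.2.2.2 j hj
  exact ⟨t, ht, htY, hjt⟩

namespace IsIntermediateReduction

variable (hred : G.IsIntermediateReduction Y G')
include hred

lemma complexes_subset (hy : y ∈ G'.complexes) : y ∈ G.complexes := by
  obtain ⟨r, hr, rfl | rfl⟩ := G'.complexes_used y hy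
  exacts [((hred r).1 hr).1, ((hred r).1 hr).2.1]

lemma species_subset : G'.species ⊆ G.species := fun i hi => by
  obtain ⟨y, hy, hyi⟩ := G'.species_used i hi
  exact G.complexes_supp y (hred.complexes_subset hy) i hyi

lemma conservative (hG : G.Conservative) : G'.Conservative := by
  obtain ⟨ω, hpos, hω⟩ := (G.conservative_iff_exists_pos_conserves subset_rfl).1 hG
  refine (G'.conservative_iff_exists_pos_conserves hred.species_subset).2
    ⟨ω, hpos, fun r hr => ?_⟩
  exact hω.eq_of_pathThrough ((hred r).1 hr).2.2.2.2.2

lemma eq_of_pathThrough {V : (ι → ℝ) → ℝ} (hV : G'.Conserves V) (hy : y ∈ G.complexes)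
    (hy' : y' ∈ G.complexes) (hyY : OffSet Y y) (hy'Y : OffSet Y y')
    (h : G.PathThrough {z | InterCplx Y z} y y') : V y = V y' := by
  by_cases hne : y = y'
  · rw [hne]
  · exact hV (y, y') ((hred _).2 ⟨hy, hy', hyY, hy'Y, hne, h⟩)

lemma conserves_of_conserves (hY : G.IsIntermediateSet Y) {V L : (ι → ℝ) → ℝ}
    (hV : G'.Conserves V) (hLV : ∀ y, OffSet Y y → L y = V y)
    (hL : ∀ j ∈ Y, ∃ t ∈ G.complexes, OffSet Y t ∧
      G.PathThrough {z | InterCplx Y z} (Pi.single j 1) t ∧ L (Pi.single j 1) = V t) :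
    G.Conserves L := by
  obtain ⟨-, -, hI1, hI2⟩ := hY
  have reach : ∀ y ∈ G.complexes, OffSet Y y → ∀ z ∈ G.complexes,
      G.PathThrough {z | InterCplx Y z} y z → V y = L z := by
    intro y hy hyY z hz hyz
    rcases hI1 z hz with hzY | ⟨j, hj, rfl⟩
    · rw [hLV z hzY]
      exact hred.eq_of_pathThrough hV hy hz hyY hzY hyz
    · obtain ⟨t, ht, htY, hjt, hLt⟩ := hL j hj
      rw [hLt]
      exact hred.eq_of_pathThrough hV hy ht hyY htY (hyz.trans ⟨j, hj, rfl⟩ hjt)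
  intro r hr
  have hr₁ := G.react_mem_fst r hr
  have hr₂ := G.react_mem_snd r hr
  rcases hI1 r.1 hr₁ with hY₁ | ⟨j, hj, hj₁⟩
  · rw [hLV r.1 hY₁]
    exact reach r.1 hr₁ hY₁ r.2 hr₂ (.of_mem_reactions hr)
  · obtain ⟨s, hs, -, -, hsY, -, hsj, -⟩ := hI2 j hj
    rw [← hj₁] at hsj
    rw [← reach s hs hsY r.1 hr₁ hsj,
      reach s hs hsY r.2 hr₂ (hsj.trans ⟨j, hj, hj₁⟩ (.of_mem_reactions hr))]

lemma conservative_of_conservative (hY : G.IsIntermediateSet Y)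
    (h0 : (0 : ι → ℝ) ∉ G.complexes) (hG' : G'.Conservative) : G.Conservative := by
  obtain ⟨ω, hpos, hω⟩ := (G'.conservative_iff_exists_pos_conserves hred.species_subset).1 hG'
  choose! t ht htY hjt using fun j (hj : j ∈ Y) => hY.exists_exit hj
  set V : (ι → ℝ) → ℝ := fun y => ∑ i ∈ G.species, ω i * y i
  refine (G.conservative_iff_exists_pos_conserves subset_rfl).2
    ⟨Y.piecewise (fun j => V (t j)) ω, fun i => ?_, hred.conserves_of_conserves hY hω
      (fun y hyY => sum_piecewise_mul_of_offSet _ _ _ hyY) fun j hj => ⟨t j, ht j hj, htY j hj,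
        hjt j hj, by rw [sum_mul_single_one (hY.2.1 hj), piecewise_eq_of_mem _ _ _ hj]⟩⟩
  by_cases hi : i ∈ Y
  · rw [piecewise_eq_of_mem _ _ _ hi]
    exact sum_species_mul_pos (ht i hi) (fun h => h0 (h ▸ ht i hi)) hpos
  · rw [piecewise_eq_of_notMem _ _ _ hi]
    exact hpos i

end IsIntermediateReduction

end Intermediates

end RN

/-- Theorem 1(iv): if `G'` is obtained from `G` by removal of a set of
intermediates `Y`, then conservativity of `G` implies conservativity of `G'`;
conversely, if `G'` is conservative and the zero complex does not belong to
the complexes of `G`, then `G` is conservative. -/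
theorem conservative_removal_of_intermediates
    {ι : Type} [DecidableEq ι] (G G' : RN ι) (Y : Finset ι)
    (hY : G.IsIntermediateSet Y) (hred : G.IsIntermediateReduction Y G') :
    (G.Conservative → G'.Conservative) ∧
    (G'.Conservative → (0 : ι → ℝ) ∉ G.complexes → G.Conservative) :=
  ⟨hred.conservative, fun hG' h0 => hred.conservative_of_conservative hY h0 hG'⟩
end

section
/- Let G = (S, C, R) be a reaction network with a set of intermediate species Y ⊆ S, let G* = (S*, C*, R*) be the reduction of G by removal of Y, and set X := (S∖Y)∖S*. If Σ is a siphon of G, then Σ* := Σ ∩ S* is either empty or a siphon of G*. Furthermore, if Σ* is empty, then Σ ∩ X is nonempty. -/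
variable {ι : Type}

/-!
Producing a species of a siphon `Σ` requires a reactant in `Σ`; iterating along a reaction path,
a path ending at a complex that meets `Σ` starts at a complex that meets `Σ`. Each reaction of
`G*` comes from such a path in `G`, and the reactant species found lies in `S*`. For the second
claim, a species of `Σ` either lies outside `Y` or is an intermediate, which by (I2) is reached by
such a path from a complex supported off `Y`.
-/

namespace RN

variable {G : RN ι} {T : Set ι}

theorem IsSiphon.exists_pos_of_pathThrough (hT : G.IsSiphon T) {A : Set (ι → ℝ)}
    {y w : ι → ℝ} (hp : G.PathThrough A y w) (hw : ∃ i ∈ T, 0 < w i) :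
    ∃ i ∈ T, 0 < y i := by
  obtain ⟨L, -, hc⟩ := hp
  induction L generalizing y with
  | nil =>
    cases hc with
    | cons_cons hr _ => exact hT.2.2 (y, w) hr hw
  | cons z L ih =>
    cases hc with
    | cons_cons hr hc => exact hT.2.2 (y, z) hr (ih hc)

theorem IsSiphon.inter_species_of_isIntermediateReduction [DecidableEq ι] {Y : Finset ι}
    {G' : RN ι} (hred : G.IsIntermediateReduction Y G') (hT : G.IsSiphon T)
    (hne : (T ∩ ↑G'.species).Nonempty) : G'.IsSiphon (T ∩ ↑G'.species) := by
  refine ⟨hne, Set.inter_subset_right, fun p hp ⟨i, hi, hpos⟩ => ?_⟩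
  obtain ⟨-, -, -, -, -, hpath⟩ := (hred p).mp hp
  obtain ⟨j, hjT, hjpos⟩ := hT.exists_pos_of_pathThrough hpath ⟨i, hi.1, hpos⟩
  exact ⟨j, ⟨hjT, G'.complexes_supp p.1 (G'.react_mem_fst p hp) j hjpos.ne'⟩, hjpos⟩

theorem IsSiphon.inter_sdiff_intermediate_nonempty [DecidableEq ι] {Y : Finset ι}
    (hY : G.IsIntermediateSet Y) (hT : G.IsSiphon T) :
    (T ∩ (↑G.species \ ↑Y)).Nonempty := by
  obtain ⟨i, hiT⟩ := hT.1
  by_cases hiY : i ∈ Y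
  · obtain ⟨y, hy, -, -, hyoff, -, hpath, -⟩ := hY.2.2.2 i hiY
    obtain ⟨j, hjT, hjpos⟩ :=
      hT.exists_pos_of_pathThrough hpath ⟨i, hiT, by simp⟩
    exact ⟨j, hjT, G.complexes_supp y hy j hjpos.ne', fun hjY => hjpos.ne' (hyoff j hjY)⟩
  · exact ⟨i, hiT, hT.2.1 hiT, hiY⟩

end RN

/-- Lemma 5: if `G'` is obtained from `G` by removal of a set of intermediates
`Y` and `Σ` is a siphon of `G`, then `Σ* := Σ ∩ S*` is either empty or a
siphon of `G'`; furthermore, if `Σ*` is empty then `Σ ∩ X` is nonempty, where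
`X := (S ∖ Y) ∖ S*`. -/
theorem siphon_restriction_after_intermediate_removal
    {ι : Type} [DecidableEq ι] (G G' : RN ι) (Y : Finset ι)
    (hY : G.IsIntermediateSet Y) (hred : G.IsIntermediateReduction Y G')
    (T : Set ι) (hT : G.IsSiphon T) :
    (T ∩ ↑G'.species = ∅ ∨ G'.IsSiphon (T ∩ ↑G'.species)) ∧
    (T ∩ ↑G'.species = ∅ →
      (T ∩ ((↑G.species \ ↑Y) \ (↑G'.species : Set ι))).Nonempty) := by
  refine ⟨?_, fun hempty => ?_⟩
  · rcases (T ∩ ↑G'.species).eq_empty_or_nonempty with hempty | hne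
    · exact Or.inl hempty
    · exact Or.inr (hT.inter_species_of_isIntermediateReduction hred hne)
  · obtain ⟨i, hiT, hiS⟩ := hT.inter_sdiff_intermediate_nonempty hY
    exact ⟨i, hiT, hiS, fun hiS' => (Set.eq_empty_iff_forall_notMem.mp hempty) i ⟨hiT, hiS'⟩⟩
end
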